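/- arXiv:2104.04396 — 7 statements merged into one kernel-verified Lean document; each statement's English description precedes it below -/
import Mathlib

section
/- Let d ≥ 2 and let E ⊆ ℝ^d be a nonempty open connected set, and let (c,p) satisfy the standing assumption. Let v : E → ℝ be continuously differentiable, and let ξ : E → ℝ^d be continuous with compact support contained in E, such that the restriction of ξ to each cell E_τ is continuously differentiable and the product map x ↦ c(x)ξ(x)p(x) is locally Lipschitz on E (hence differentiable Lebesgue-a.e. by Rademacher's theorem). Then (1/2)∫_E (∇v(x))ᵀ c(x) ξ(x) p(x) dx = −(1/2)∫_E v(x) · div(cξp)(x) dx, where div(cξp)(x) = Σ_{i=1}^d ∂_i (Σ_j c_{ij} ξ_j p)(x) is the a.e.-defined divergence and both integrals are with respect to Lebesgue measure. -/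
/-!
Write `h i = ∑ j, c i j ξ j p`. By hypothesis `h i` is locally Lipschitz on `E` and vanishes off
the compact set `closure {ξ ≠ 0} ⊆ E`, so it is globally Lipschitz; so is `v * h i`, since `v`
is `C¹` near that set. A Lipschitz function `g` with compact support has `∫ ∂ᵢ g = 0`: the
difference quotients of `g` have integral zero by translation invariance and converge in `L¹` to
the a.e. derivative given by Rademacher's theorem. Applied to `g = v * h i`, together with the
a.e. product rule, this gives `∫ ∂ᵢv · h i = -∫ v · ∂ᵢ(h i)`; sum over `i`.
-/

open MeasureTheory

/-- The open cell of points of `E` whose coordinates are strictly decreasing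
along the permutation `τ`: `E_τ = {x ∈ E : x_{τ(1)} > x_{τ(2)} > ⋯ > x_{τ(d)}}`. -/
def cell {d : ℕ} (E : Set (Fin d → ℝ)) (τ : Equiv.Perm (Fin d)) : Set (Fin d → ℝ) :=
  {x ∈ E | StrictAnti fun k => x (τ k)}

open Topology Metric

section Lipschitz

variable {α β : Type*} [PseudoMetricSpace α]

lemma LocallyLipschitzOn.real_mul {s : Set α} {f g : α → ℝ} (hf : LocallyLipschitzOn s f)
    (hg : LocallyLipschitzOn s g) : LocallyLipschitzOn s fun x => f x * g x := by
  rw [locallyLipschitzOn_iff_restrict] at *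
  exact (contDiff_mul (𝕜 := ℝ) (n := 1)).locallyLipschitz.comp (hf.prodMk hg)

lemma locallyLipschitzOn_of_forall_isCompact [LocallyCompactSpace α] [PseudoMetricSpace β]
    {U : Set α} {f : α → β} (hU : IsOpen U)
    (hf : ∀ K ⊆ U, IsCompact K → ∃ L, LipschitzOnWith L f K) : LocallyLipschitzOn U f := by
  intro x hx
  obtain ⟨K, hK, hxK, hKU⟩ := exists_compact_subset hU hx
  obtain ⟨L, hL⟩ := hf K hKU hK
  exact ⟨L, K, mem_nhdsWithin_of_mem_nhds (mem_interior_iff_mem_nhds.1 hxK), hL⟩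

variable [SeminormedAddCommGroup β]

lemma LocallyLipschitzOn.locallyLipschitz_of_tsupport_subset {U : Set α} {f : α → β}
    (hU : IsOpen U) (hf : LocallyLipschitzOn U f) (hfU : tsupport f ⊆ U) :
    LocallyLipschitz f := by
  intro x
  by_cases hx : x ∈ U
  · simpa only [hU.nhdsWithin_eq hx] using hf hx
  · have hzero : f =ᶠ[𝓝 x] 0 := notMem_tsupport_iff_eventuallyEq.1 fun h => hx (hfU h)
    exact ⟨0, _, hzero, fun y hy z hz => by simp [show f y = 0 from hy, show f z = 0 from hz]⟩

lemma LocallyLipschitz.exists_lipschitzWith_of_hasCompactSupport [ProperSpace α] {f : α → β}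
    (hf : LocallyLipschitz f) (hsupp : HasCompactSupport f) : ∃ C, LipschitzWith C f := by
  -- Near the support use the Lipschitz constant on the compact `1`-thickening `K`;
  -- away from `K`, `dist (f x) (f y) = ‖f x‖ ≤ M ≤ M * dist x y`.
  set K := cthickening 1 (tsupport f)
  obtain ⟨L, hL⟩ := (hf.locallyLipschitzOn (s := K)).exists_lipschitzOnWith_of_compact
    hsupp.cthickening
  obtain ⟨M, hM⟩ := hsupp.exists_bound_of_continuous hf.continuous
  have hfar : ∀ x ∈ tsupport f, ∀ y, dist (f x) (f y) ≤ ↑(L + M.toNNReal) * dist x y := by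
    intro x hx y
    by_cases hy : y ∈ K
    · calc dist (f x) (f y) ≤ L * dist x y :=
            hL.dist_le_mul x (self_subset_cthickening _ hx) y hy
        _ ≤ ↑(L + M.toNNReal) * dist x y := by gcongr; exact_mod_cast le_self_add
    · have hxy : 1 < dist x y := by
        by_contra! h
        exact hy (mem_cthickening_of_dist_le y x 1 _ hx (by rwa [dist_comm]))
      have hfy : f y = 0 :=
        image_eq_zero_of_notMem_tsupport fun h => hy (self_subset_cthickening _ h)
      calc dist (f x) (f y) = ‖f x‖ := by rw [hfy, dist_zero_right]
        _ ≤ M.toNNReal * 1 := by simpa using (hM x).trans (le_max_left M 0)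
        _ ≤ ↑(L + M.toNNReal) * dist x y := by gcongr; exact_mod_cast le_add_self
  refine ⟨L + M.toNNReal, LipschitzWith.of_dist_le_mul fun x y => ?_⟩
  by_cases hx : x ∈ tsupport f
  · exact hfar x hx y
  by_cases hy : y ∈ tsupport f
  · simpa only [dist_comm] using hfar y hy x
  · simp only [image_eq_zero_of_notMem_tsupport hx, image_eq_zero_of_notMem_tsupport hy, dist_self]
    positivity

lemma LocallyLipschitzOn.exists_lipschitzWith_of_tsupport_subset [ProperSpace α] {U : Set α}
    {f : α → β} (hU : IsOpen U) (hf : LocallyLipschitzOn U f) (hsupp : HasCompactSupport f)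
    (hfU : tsupport f ⊆ U) : ∃ C, LipschitzWith C f :=
  (hf.locallyLipschitz_of_tsupport_subset hU hfU).exists_lipschitzWith_of_hasCompactSupport hsupp

end Lipschitz

section IntegrationByParts

variable {F : Type*} [NormedAddCommGroup F] [NormedSpace ℝ F]

lemma ContDiffOn.locallyLipschitzOn_of_isOpen {U : Set F} {u : F → ℝ} (hU : IsOpen U)
    (hu : ContDiffOn ℝ 1 u U) : LocallyLipschitzOn U u := by
  intro x hx
  obtain ⟨K, t, ht, hK⟩ := (hu.contDiffAt (hU.mem_nhds hx)).exists_lipschitzOnWith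
  exact ⟨K, t, mem_nhdsWithin_of_mem_nhds ht, hK⟩

variable [MeasurableSpace F] [BorelSpace F] {μ : Measure F}

lemma LipschitzWith.integrable_fderiv_apply [IsFiniteMeasureOnCompacts μ] {C : NNReal}
    {f : F → ℝ} (hf : LipschitzWith C f) (hsupp : HasCompactSupport f) (w : F) :
    Integrable (fun x => fderiv ℝ f x w) μ := by
  refine (integrableOn_iff_integrable_of_support_subset fun x hx => ?_).1
    (Measure.integrableOn_of_bounded hsupp.measure_lt_top.ne
      (measurable_fderiv_apply_const ℝ f w).aestronglyMeasurable
      (M := C * ‖w‖) (ae_of_all _ fun x => ?_))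
  · exact support_fderiv_subset ℝ fun h => hx (by simp [h])
  · exact ((fderiv ℝ f x).le_opNorm w).trans
      (by gcongr; exact norm_fderiv_le_of_lipschitz ℝ hf)

lemma integrableOn_fderiv_apply_mul [IsFiniteMeasureOnCompacts μ] {U : Set F} {u h : F → ℝ}
    (hU : IsOpen U) (hu : ContDiffOn ℝ 1 u U) (hh : Continuous h) (hsupp : HasCompactSupport h)
    (hhU : tsupport h ⊆ U) (w : F) : IntegrableOn (fun x => fderiv ℝ u x w * h x) U μ := by
  have hu' : ContinuousOn (fun x => fderiv ℝ u x w) U :=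
    (hu.continuousOn_fderiv_of_isOpen hU le_rfl).clm_apply continuousOn_const
  refine Integrable.integrableOn ((integrableOn_iff_integrable_of_support_subset ?_).1
    ((hu'.mono hhU).mul hh.continuousOn |>.integrableOn_compact hsupp))
  exact (Function.support_mul_subset_right _ _).trans (subset_tsupport h)

lemma integrableOn_mul_fderiv_apply [IsFiniteMeasureOnCompacts μ] {U : Set F} {u h : F → ℝ}
    {C : NNReal} (hu : ContinuousOn u U) (hh : LipschitzWith C h) (hsupp : HasCompactSupport h)
    (hhU : tsupport h ⊆ U) (w : F) : IntegrableOn (fun x => u x * fderiv ℝ h x w) U μ := by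
  refine Integrable.integrableOn ((integrableOn_iff_integrable_of_support_subset ?_).1
    ((hh.integrable_fderiv_apply hsupp w).integrableOn.continuousOn_mul (hu.mono hhU) hsupp))
  exact (Function.support_mul_subset_right _ _).trans fun x hx =>
    support_fderiv_subset ℝ fun h => hx (by simp [h])

variable [FiniteDimensional ℝ F] [μ.IsAddHaarMeasure]

lemma ae_restrict_fderiv_mul_apply {U : Set F} {u h : F → ℝ} {C : NNReal} (hU : IsOpen U)
    (hu : ContDiffOn ℝ 1 u U) (hh : LipschitzWith C h) (w : F) :
    ∀ᵐ x ∂μ.restrict U,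
      fderiv ℝ (fun y => u y * h y) x w = fderiv ℝ u x w * h x + u x * fderiv ℝ h x w := by
  filter_upwards [ae_restrict_of_ae hh.ae_differentiableAt, ae_restrict_mem hU.measurableSet]
    with x hhx hx
  rw [fderiv_fun_mul ((hu.differentiableOn one_ne_zero).differentiableAt (hU.mem_nhds hx)) hhx]
  simp only [add_apply, smul_apply, smul_eq_mul]
  ring

theorem LipschitzWith.integral_fderiv_apply_eq_zero {C : NNReal} {f : F → ℝ}
    (hf : LipschitzWith C f) (hsupp : HasCompactSupport f) (w : F) :
    ∫ x, fderiv ℝ f x w ∂μ = 0 := by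
  have hlim := hf.integral_inv_smul_sub_mul_tendsto_integral_lineDeriv_mul' (μ := μ) hsupp
    (g := fun _ => 1) continuous_const w
  have hquot : ∀ t : ℝ, ∫ x, t⁻¹ • (f (x + t • w) - f x) * 1 ∂μ = 0 := by
    intro t
    have hint := hf.continuous.integrable_of_hasCompactSupport hsupp (μ := μ)
    simp only [mul_one, smul_eq_mul]
    rw [integral_const_mul, integral_sub _ hint, integral_add_right_eq_self, sub_self, mul_zero]
    exact (hf.continuous.comp (continuous_add_const _)).integrable_of_hasCompactSupport
      (hsupp.comp_homeomorph (Homeomorph.addRight (t • w)))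
  have hderiv : ∫ x, lineDeriv ℝ f x w * 1 ∂μ = ∫ x, fderiv ℝ f x w ∂μ := by
    refine integral_congr_ae ?_
    filter_upwards [hf.ae_differentiableAt] with x hx
    rw [mul_one, hx.lineDeriv_eq_fderiv]
  simp only [hquot, hderiv] at hlim
  exact tendsto_nhds_unique hlim tendsto_const_nhds

theorem integral_fderiv_apply_mul_eq_neg_integral_mul_fderiv_apply {U : Set F} {u h : F → ℝ}
    (hU : IsOpen U) (hu : ContDiffOn ℝ 1 u U) (hh : LocallyLipschitzOn U h)
    (hsupp : HasCompactSupport h) (hhU : tsupport h ⊆ U) (w : F) :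
    ∫ x in U, fderiv ℝ u x w * h x ∂μ = -∫ x in U, u x * fderiv ℝ h x w ∂μ := by
  obtain ⟨C, hC⟩ := hh.exists_lipschitzWith_of_tsupport_subset hU hsupp hhU
  have huhU : tsupport (fun x => u x * h x) ⊆ U := tsupport_mul_subset_right.trans hhU
  have huh : LocallyLipschitzOn U fun x => u x * h x :=
    (hu.locallyLipschitzOn_of_isOpen hU).real_mul hh
  obtain ⟨D, hD⟩ := huh.exists_lipschitzWith_of_tsupport_subset hU hsupp.mul_left huhU
  have hzero : ∫ x in U, fderiv ℝ (fun y => u y * h y) x w ∂μ = 0 := by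
    rw [setIntegral_eq_integral_of_forall_compl_eq_zero fun x hx => ?_]
    · exact hD.integral_fderiv_apply_eq_zero hsupp.mul_left w
    · rw [fderiv_of_notMem_tsupport ℝ fun h => hx (huhU h), zero_apply]
  rw [integral_congr_ae (ae_restrict_fderiv_mul_apply hU hu hC w),
    integral_add (integrableOn_fderiv_apply_mul hU hu hC.continuous hsupp hhU w)
      (integrableOn_mul_fderiv_apply hu.continuousOn hC hsupp hhU w)] at hzero
  linarith

end IntegrationByParts

theorem stmt_0_general {d : ℕ}
    (E : Set (Fin d → ℝ)) (hEopen : IsOpen E)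
    (c : (Fin d → ℝ) → Matrix (Fin d) (Fin d) ℝ) (p : (Fin d → ℝ) → ℝ)
    -- v ∈ C¹(E)
    (v : (Fin d → ℝ) → ℝ) (hv : ContDiffOn ℝ 1 v E)
    -- ξ ∈ C¹_{𝒯,c}(E; ℝ^d)
    (ξ : (Fin d → ℝ) → Fin d → ℝ)
    (hξ_supp : closure {x | ξ x ≠ 0} ⊆ E)
    (hξ_comp : IsCompact (closure {x | ξ x ≠ 0}))
    -- the product cξp is locally Lipschitz on E
    (hcξp_lip : ∀ K, K ⊆ E → IsCompact K →
      ∃ L : NNReal, ∀ i, LipschitzOnWith L (fun x => ∑ j, c x i j * ξ x j * p x) K) :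
    (1 / 2 : ℝ) * ∫ x in E, ∑ i, ∑ j,
        fderiv ℝ v x (Pi.single i 1) * c x i j * ξ x j * p x
      = -(1 / 2 : ℝ) * ∫ x in E, v x *
          ∑ i, fderiv ℝ (fun y => ∑ j, c y i j * ξ y j * p y) x (Pi.single i 1) := by
  set h : Fin d → (Fin d → ℝ) → ℝ := fun i y => ∑ j, c y i j * ξ y j * p y
  have h_lip (i : Fin d) : LocallyLipschitzOn E (h i) :=
    locallyLipschitzOn_of_forall_isCompact hEopen fun K hKE hK =>
      (hcξp_lip K hKE hK).imp fun _ hL => hL i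
  have h_tsupport (i : Fin d) : tsupport (h i) ⊆ closure {x | ξ x ≠ 0} := by
    refine closure_mono fun x hx => ?_
    contrapose! hx
    simp [h, show ξ x = 0 by simpa using hx]
  have h_supp (i : Fin d) : HasCompactSupport (h i) :=
    hξ_comp.of_isClosed_subset (isClosed_tsupport _) (h_tsupport i)
  have h_suppE (i : Fin d) : tsupport (h i) ⊆ E := (h_tsupport i).trans hξ_supp
  choose C hC using fun i =>
    (h_lip i).exists_lipschitzWith_of_tsupport_subset hEopen (h_supp i) (h_suppE i)
  have hlhs : ∀ x, ∑ i, ∑ j, fderiv ℝ v x (Pi.single i 1) * c x i j * ξ x j * p x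
      = ∑ i, fderiv ℝ v x (Pi.single i 1) * h i x := fun x => by
    simp only [h, Finset.mul_sum, mul_assoc]
  simp only [hlhs, Finset.mul_sum]
  rw [integral_finsetSum _ fun i _ => integrableOn_fderiv_apply_mul hEopen hv (hC i).continuous
      (h_supp i) (h_suppE i) _,
    integral_finsetSum _ fun i _ => integrableOn_mul_fderiv_apply hv.continuousOn (hC i)
      (h_supp i) (h_suppE i) _]
  simp only [integral_fderiv_apply_mul_eq_neg_integral_mul_fderiv_apply hEopen hv (h_lip _)
    (h_supp _) (h_suppE _), Finset.sum_neg_distrib]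
  ring

/-- **Integration by parts (Theorem 2.2).** -/
theorem stmt_0 {d : ℕ} (hd : 2 ≤ d)
    (E : Set (Fin d → ℝ)) (hEopen : IsOpen E) (hEne : E.Nonempty)
    (hEconn : IsConnected E)
    (c : (Fin d → ℝ) → Matrix (Fin d) (Fin d) ℝ) (p : (Fin d → ℝ) → ℝ)
    -- standing assumption on (c, p)
    (hc_pos : ∀ x ∈ E, (c x).PosDef)
    (hc_cont : ∀ i j, ContinuousOn (fun x => c x i j) E)
    (hc_C1 : ∀ τ : Equiv.Perm (Fin d), ∀ i j, ContDiffOn ℝ 1 (fun x => c x i j) (cell E τ))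
    (hp_pos : ∀ x ∈ E, 0 < p x)
    (hp_cont : ContinuousOn p E)
    (hp_C1 : ∀ τ : Equiv.Perm (Fin d), ContDiffOn ℝ 1 p (cell E τ))
    (hcp_lip : ∀ K, K ⊆ E → IsCompact K →
      ∃ L : NNReal, ∀ i j, LipschitzOnWith L (fun x => c x i j * p x) K)
    -- v ∈ C¹(E)
    (v : (Fin d → ℝ) → ℝ) (hv : ContDiffOn ℝ 1 v E)
    -- ξ ∈ C¹_{𝒯,c}(E; ℝ^d)
    (ξ : (Fin d → ℝ) → Fin d → ℝ)
    (hξ_cont : ContinuousOn ξ E)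
    (hξ_supp : closure {x | ξ x ≠ 0} ⊆ E)
    (hξ_comp : IsCompact (closure {x | ξ x ≠ 0}))
    (hξ_C1 : ∀ τ : Equiv.Perm (Fin d), ContDiffOn ℝ 1 ξ (cell E τ))
    -- the product cξp is locally Lipschitz on E
    (hcξp_lip : ∀ K, K ⊆ E → IsCompact K →
      ∃ L : NNReal, ∀ i, LipschitzOnWith L (fun x => ∑ j, c x i j * ξ x j * p x) K) :
    (1 / 2 : ℝ) * ∫ x in E, ∑ i, ∑ j,
        fderiv ℝ v x (Pi.single i 1) * c x i j * ξ x j * p x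
      = -(1 / 2 : ℝ) * ∫ x in E, v x *
          ∑ i, fderiv ℝ (fun y => ∑ j, c y i j * ξ y j * p y) x (Pi.single i 1) :=
  stmt_0_general E hEopen c p v hv ξ hξ_supp hξ_comp hcξp_lip
end

section
/- Let d ≥ 2 and let E ⊆ ℝ^d be a nonempty open connected set, and let (c,p) satisfy the standing assumption. Let u : E → ℝ be continuous with compact support contained in E, twice continuously differentiable on each cell E_τ, and assume its gradient ∇u (defined on the union of the cells) extends to a continuous vector field on E and that x ↦ c(x)∇u(x)p(x) is locally Lipschitz on E. Then for every continuously differentiable v : E → ℝ, (1/2)∫_E (∇u(x))ᵀ c(x) ∇v(x) p(x) dx = −∫_E v(x) (Lu)(x) p(x) dx, where Lu := bᵀ∇u + (1/2)tr(c∇²u) and b := (1/2)div c + (1/2)c∇log p are defined Lebesgue-a.e. on E (on each open cell E_τ all derivatives exist classically). -/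
/-!
On each cell `E_τ` the flux `c ∇u p` is `C¹`, and the product rule together with the symmetry of
`c` shows that its divergence is `2 (Lu) p`. Since `∇u` extends continuously to `E` and vanishes on
the cells outside `supp u`, the extended flux vanishes on `E \ supp u`; being locally Lipschitz, it
is then globally Lipschitz after extension by zero. Integration by parts for Lipschitz functions
(Rademacher) against a `C¹` compactly supported function equal to `v` near `supp u` gives the
identity, because the cells cover `E` up to the null set of points with two equal coordinates.
-/

open MeasureTheory

open Metric Filter Topology Set
open scoped Manifold

theorem LipschitzOnWith.exists_lipschitzWith_of_eq_zero_off {X : Type*} [PseudoMetricSpace X]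
    {f : X → ℝ} {S : Set X} {δ : ℝ} {L : NNReal} (hS : IsCompact S) (hδ : 0 < δ)
    (hf : LipschitzOnWith L f (cthickening δ S)) (hf0 : ∀ x ∉ S, f x = 0) :
    ∃ M, LipschitzWith M f := by
  obtain ⟨B, hB⟩ :=
    hS.exists_bound_of_continuousOn (hf.continuousOn.mono (self_subset_cthickening S))
  set M := L + (B / δ).toNNReal
  have hS_le : ∀ x ∈ S, ∀ y, dist (f x) (f y) ≤ M * dist x y := by
    intro x hx y
    by_cases hy : y ∈ cthickening δ S
    · calc dist (f x) (f y) ≤ L * dist x y :=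
            hf.dist_le_mul x (self_subset_cthickening S hx) y hy
        _ ≤ M * dist x y := by gcongr; exact le_self_add
    · have hxy : δ < dist x y := by
        by_contra! h
        exact hy (mem_cthickening_of_dist_le y x δ S hx (by rwa [dist_comm]))
      have hBδ : B ≤ B / δ * dist x y := by
        rw [div_mul_eq_mul_div, le_div_iff₀ hδ]
        exact mul_le_mul_of_nonneg_left hxy.le ((norm_nonneg _).trans (hB x hx))
      calc dist (f x) (f y) = ‖f x‖ := by
            rw [hf0 y fun h => hy (self_subset_cthickening S h), dist_zero_right]
        _ ≤ B / δ * dist x y := (hB x hx).trans hBδ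
        _ ≤ M * dist x y := by
            gcongr
            exact (Real.le_coe_toNNReal _).trans (by simp [M])
  refine ⟨M, LipschitzWith.of_dist_le_mul fun x y => ?_⟩
  by_cases hx : x ∈ S
  · exact hS_le x hx y
  by_cases hy : y ∈ S
  · rw [dist_comm, dist_comm x]; exact hS_le y hy x
  · rw [hf0 x hx, hf0 y hy, dist_self]; positivity

theorem IsCompact.exists_contDiff_tsupport_subset_eventually_one {X : Type*}
    [NormedAddCommGroup X] [NormedSpace ℝ X] [FiniteDimensional ℝ X] {S E : Set X}
    (hS : IsCompact S) (hE : IsOpen E) (hSE : S ⊆ E) :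
    ∃ χ : X → ℝ, ContDiff ℝ 1 χ ∧ HasCompactSupport χ ∧ tsupport χ ⊆ E ∧
      ∀ᶠ x in 𝓝ˢ S, χ x = 1 := by
  obtain ⟨δ, hδ, hK⟩ := hS.exists_cthickening_subset_open hE hSE
  obtain ⟨χ, h1, h0, -⟩ := exists_contMDiffMap_one_nhds_of_subset_interior 𝓘(ℝ, X)
    (n := 1) hS.isClosed (t := thickening δ S)
    (by rw [isOpen_thickening.interior_eq]; exact self_subset_thickening hδ S)
  have hsupp : tsupport χ ⊆ cthickening δ S :=
    closure_minimal (fun x hx => thickening_subset_cthickening δ S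
      (by_contra fun h => hx (h0 x h))) isClosed_cthickening
  exact ⟨χ, contMDiff_iff_contDiff.1 χ.contMDiff, hS.cthickening.of_isClosed_subset
    (isClosed_tsupport _) hsupp, hsupp.trans hK, h1⟩

theorem ContDiffOn.exists_contDiff_hasCompactSupport_eventuallyEq {X : Type*}
    [NormedAddCommGroup X] [NormedSpace ℝ X] [FiniteDimensional ℝ X] {S E : Set X}
    (hS : IsCompact S) (hE : IsOpen E) (hSE : S ⊆ E) {v : X → ℝ} (hv : ContDiffOn ℝ 1 v E) :
    ∃ w : X → ℝ, ContDiff ℝ 1 w ∧ HasCompactSupport w ∧ ∀ᶠ x in 𝓝ˢ S, w x = v x := by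
  obtain ⟨χ, hχ, hχc, hχE, hχ1⟩ := hS.exists_contDiff_tsupport_subset_eventually_one hE hSE
  refine ⟨fun x => χ x * v x, contDiff_iff_contDiffAt.2 fun x => ?_, hχc.mul_right,
    hχ1.mono fun x hx => by simp [hx]⟩
  by_cases hx : x ∈ E
  · exact hχ.contDiffAt.mul (hv.contDiffAt (hE.mem_nhds hx))
  · refine contDiffAt_const (c := 0).congr_of_eventuallyEq ?_
    filter_upwards [(notMem_tsupport_iff_eventuallyEq.1 fun h => hx (hχE h))] with y hy
    simp [hy]

theorem LipschitzWith.integral_fderiv_mul_eq_neg {X : Type*} [NormedAddCommGroup X]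
    [NormedSpace ℝ X] [FiniteDimensional ℝ X] [MeasurableSpace X] [BorelSpace X]
    {μ : Measure X} [μ.IsAddHaarMeasure] {f g : X → ℝ} {C : NNReal} (hf : LipschitzWith C f)
    (hg : ContDiff ℝ 1 g) (hgc : HasCompactSupport g) (w : X) :
    ∫ x, fderiv ℝ g x w * f x ∂μ = -∫ x, g x * lineDeriv ℝ f x w ∂μ := by
  obtain ⟨D, hD⟩ := hg.lipschitzWith_of_hasCompactSupport hgc one_ne_zero
  have := hf.integral_lineDeriv_mul_eq (μ := μ) hD hgc w
  simp only [((hg.differentiable one_ne_zero) _).lineDeriv_eq_fderiv, map_neg, neg_mul,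
    integral_neg] at this
  simp only [mul_comm (g _), this, neg_neg]

theorem setIntegral_sum_fderiv_mul_eq_neg_mul_sum_lineDeriv {X : Type*}
    [NormedAddCommGroup X] [NormedSpace ℝ X] [FiniteDimensional ℝ X] [MeasurableSpace X]
    [BorelSpace X] (μ : Measure X) [μ.IsAddHaarMeasure] {ι : Type*} [Fintype ι]
    {E S : Set X} (hE : IsOpen E) (hS : IsCompact S) (hSE : S ⊆ E)
    {F : ι → X → ℝ} {M : ι → NNReal} (hF : ∀ i, LipschitzWith (M i) (F i))
    (hF0 : ∀ i, ∀ x ∉ S, F i x = 0) {v : X → ℝ} (hv : ContDiffOn ℝ 1 v E) (w : ι → X) :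
    ∫ x in E, ∑ i, fderiv ℝ v x (w i) * F i x ∂μ =
      -∫ x in E, v x * ∑ i, lineDeriv ℝ (F i) x (w i) ∂μ := by
  obtain ⟨vt, hvt, hvtc, hvtS⟩ := hv.exists_contDiff_hasCompactSupport_eventuallyEq hS hE hSE
  have hvt_near : ∀ x ∈ S, vt =ᶠ[𝓝 x] v := fun x hx => hvtS.filter_mono (nhds_le_nhdsSet hx)
  have hF_near : ∀ i, ∀ x ∉ S, F i =ᶠ[𝓝 x] 0 := fun i x hx =>
    eventually_of_mem (hS.isClosed.isOpen_compl.mem_nhds hx) (hF0 i)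
  have hleft : E.indicator (fun x => ∑ i, fderiv ℝ v x (w i) * F i x) =
      fun x => ∑ i, fderiv ℝ vt x (w i) * F i x := by
    ext x
    by_cases hx : x ∈ S
    · rw [indicator_of_mem (hSE hx), (hvt_near x hx).fderiv_eq]
    · have : ∀ i, F i x = 0 := fun i => hF0 i x hx
      simp [this]
  have hright : E.indicator (fun x => v x * ∑ i, lineDeriv ℝ (F i) x (w i)) =
      fun x => ∑ i, vt x * lineDeriv ℝ (F i) x (w i) := by
    ext x
    by_cases hx : x ∈ S
    · rw [indicator_of_mem (hSE hx), (hvt_near x hx).eq_of_nhds, Finset.mul_sum]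
    · have : ∀ i, lineDeriv ℝ (F i) x (w i) = 0 := fun i =>
        ((hF_near i x hx).lineDeriv_eq).trans (by simp [lineDeriv])
      simp [this]
  rw [← integral_indicator hE.measurableSet, ← integral_indicator hE.measurableSet, hleft,
    hright, integral_finsetSum, integral_finsetSum, ← Finset.sum_neg_distrib]
  · exact Finset.sum_congr rfl fun i _ => (hF i).integral_fderiv_mul_eq_neg hvt hvtc (w i)
  · exact fun i _ => (hvt.continuous.integrable_of_hasCompactSupport hvtc).mul_bdd
      ((hF i).memLp_lineDeriv (w i)).aestronglyMeasurable
      (Eventually.of_forall fun x => norm_lineDeriv_le_of_lipschitz ℝ (hF i))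
  · exact fun i _ => Continuous.integrable_of_hasCompactSupport
      (((hvt.continuous_fderiv one_ne_zero).clm_apply continuous_const).mul (hF i).continuous)
      (HasCompactSupport.intro hS (hF0 i)).mul_left

section Cells

variable {d : ℕ} {E : Set (Fin d → ℝ)}

theorem isOpen_cell (hE : IsOpen E) (τ : Equiv.Perm (Fin d)) : IsOpen (cell E τ) := by
  have : cell E τ = E ∩ ⋂ (k : Fin d) (l : Fin d) (_ : k < l), {x | x (τ l) < x (τ k)} := by
    ext x
    simp [cell, StrictAnti]
  rw [this]
  exact hE.inter (isOpen_iInter_of_finite fun k => isOpen_iInter_of_finite fun l =>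
    isOpen_iInter_of_finite fun _ => isOpen_lt (continuous_apply _) (continuous_apply _))

theorem exists_mem_cell_of_injective {x : Fin d → ℝ} (hx : x ∈ E)
    (hinj : Function.Injective x) : ∃ τ : Equiv.Perm (Fin d), x ∈ cell E τ := by
  have hmono : StrictMono (x ∘ Tuple.sort x) :=
    (Tuple.monotone_sort x).strictMono_of_injective (hinj.comp (Tuple.sort x).injective)
  exact ⟨Fin.revPerm.trans (Tuple.sort x), hx, fun a b hab => hmono (Fin.rev_lt_rev.2 hab)⟩

theorem ae_injective : ∀ᵐ x : Fin d → ℝ, Function.Injective x := by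
  refine ae_all_iff.2 fun i => ae_all_iff.2 fun j => ?_
  rcases eq_or_ne i j with rfl | hij
  · exact Eventually.of_forall fun _ _ => rfl
  set φ : (Fin d → ℝ) →ₗ[ℝ] ℝ :=
    LinearMap.proj (R := ℝ) (φ := fun _ => ℝ) i - LinearMap.proj j
  have hφ : φ ≠ 0 := fun h => by
    simpa [φ, Pi.single_eq_of_ne hij.symm] using LinearMap.congr_fun h (Pi.single i 1)
  have hnull : volume (LinearMap.ker φ : Set (Fin d → ℝ)) = 0 :=
    Measure.addHaar_submodule _ _ (by rwa [Ne, LinearMap.ker_eq_top])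
  refine measure_mono_null (fun x hx => ?_) hnull
  have hxij : x i = x j := by_contra fun h => hx fun h' => absurd h' h
  simp [φ, hxij]

theorem ae_restrict_exists_mem_cell (hE : MeasurableSet E) :
    ∀ᵐ x ∂volume.restrict E, ∃ τ, x ∈ cell E τ := by
  filter_upwards [ae_restrict_mem hE, ae_restrict_of_ae ae_injective] with x hx hinj
  exact exists_mem_cell_of_injective hx hinj

theorem eqOn_zero_of_eq_fderiv_on_cells (hE : IsOpen E) {u : (Fin d → ℝ) → ℝ}
    {G : (Fin d → ℝ) → Fin d → ℝ} (hG : ContinuousOn G E)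
    (hG_grad : ∀ τ : Equiv.Perm (Fin d), ∀ x ∈ cell E τ, ∀ i,
      G x i = fderiv ℝ u x (Pi.single i 1)) :
    EqOn G 0 (E \ tsupport u) := by
  have hW : IsOpen (E \ tsupport u) := hE.sdiff (isClosed_tsupport u)
  refine Measure.eqOn_open_of_ae_eq (μ := volume) ?_ hW (hG.mono sdiff_subset)
    continuousOn_const
  filter_upwards [ae_restrict_of_ae_restrict_of_subset sdiff_subset
    (ae_restrict_exists_mem_cell hE.measurableSet), ae_restrict_mem hW.measurableSet]
    with x ⟨τ, hx⟩ hxu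
  funext i
  rw [hG_grad τ x hx i, fderiv_of_notMem_tsupport ℝ hxu.2]
  rfl

end Cells

section Generator

variable {d : ℕ}

noncomputable def drift (c : (Fin d → ℝ) → Matrix (Fin d) (Fin d) ℝ) (p : (Fin d → ℝ) → ℝ)
    (x : Fin d → ℝ) (i : Fin d) : ℝ :=
  (1 / 2 : ℝ) * (∑ j, fderiv ℝ (fun y => c y i j) x (Pi.single j 1))
    + (1 / 2 : ℝ) * ∑ j, c x i j * fderiv ℝ (fun y => Real.log (p y)) x (Pi.single j 1)

noncomputable def generator (c : (Fin d → ℝ) → Matrix (Fin d) (Fin d) ℝ)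
    (p u : (Fin d → ℝ) → ℝ) (x : Fin d → ℝ) : ℝ :=
  (∑ i, drift c p x i * fderiv ℝ u x (Pi.single i 1))
    + (1 / 2 : ℝ) * ∑ i, ∑ j, c x i j *
      fderiv ℝ (fun y => fderiv ℝ u y (Pi.single j 1)) x (Pi.single i 1)

theorem lineDeriv_flux_eq {c : (Fin d → ℝ) → Matrix (Fin d) (Fin d) ℝ} {p u : (Fin d → ℝ) → ℝ}
    {x : Fin d → ℝ} (hc : ∀ i j, DifferentiableAt ℝ (fun y => c y i j) x)
    (hp : DifferentiableAt ℝ p x)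
    (hu : ∀ k, DifferentiableAt ℝ (fun y => fderiv ℝ u y (Pi.single k 1)) x) (j : Fin d) :
    lineDeriv ℝ (fun y => ∑ k, c y j k * fderiv ℝ u y (Pi.single k 1) * p y) x
      (Pi.single j 1) = ∑ k,
        (fderiv ℝ (fun y => c y j k) x (Pi.single j 1) * fderiv ℝ u x (Pi.single k 1) * p x
        + c x j k * fderiv ℝ (fun y => fderiv ℝ u y (Pi.single k 1)) x (Pi.single j 1) * p x
        + c x j k * fderiv ℝ u x (Pi.single k 1) * fderiv ℝ p x (Pi.single j 1)) := by
  have hd : ∀ k, HasFDerivAt (fun y => c y j k * fderiv ℝ u y (Pi.single k 1) * p y)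
      ((c x j k * fderiv ℝ u x (Pi.single k 1)) • fderiv ℝ p x + p x •
        (c x j k • fderiv ℝ (fun y => fderiv ℝ u y (Pi.single k 1)) x
          + fderiv ℝ u x (Pi.single k 1) • fderiv ℝ (fun y => c y j k) x)) x := fun k =>
    ((hc j k).hasFDerivAt.mul (hu k).hasFDerivAt).mul hp.hasFDerivAt
  rw [(HasFDerivAt.fun_sum fun k _ => hd k).differentiableAt.lineDeriv_eq_fderiv,
    (HasFDerivAt.fun_sum fun k _ => hd k).fderiv]
  simp only [FunLike.coe_sum, Finset.sum_apply, add_apply, FunLike.coe_smul, Pi.smul_apply,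
    smul_eq_mul]
  exact Finset.sum_congr rfl fun k _ => by ring

theorem sum_lineDeriv_flux_eq_two_mul_generator_mul
    {c : (Fin d → ℝ) → Matrix (Fin d) (Fin d) ℝ} {p u : (Fin d → ℝ) → ℝ} {x : Fin d → ℝ}
    (hsymm : ∀ᶠ y in 𝓝 x, (c y).IsSymm) (hc : ∀ i j, DifferentiableAt ℝ (fun y => c y i j) x)
    (hp : DifferentiableAt ℝ p x) (hpx : p x ≠ 0)
    (hu : ∀ k, DifferentiableAt ℝ (fun y => fderiv ℝ u y (Pi.single k 1)) x) :
    ∑ j, lineDeriv ℝ (fun y => ∑ k, c y j k * fderiv ℝ u y (Pi.single k 1) * p y) x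
        (Pi.single j 1) = 2 * (generator c p u x * p x) := by
  have hcx : ∀ j k, c x j k = c x k j := fun j k => hsymm.self_of_nhds.apply k j
  have hdc : ∀ j k, fderiv ℝ (fun y => c y j k) x = fderiv ℝ (fun y => c y k j) x := fun j k =>
    EventuallyEq.fderiv_eq (hsymm.mono fun y hy => hy.apply k j)
  have hdiv : ∑ j, ∑ k, fderiv ℝ (fun y => c y j k) x (Pi.single j 1) *
      fderiv ℝ u x (Pi.single k 1) * p x = (∑ i, (∑ j, fderiv ℝ (fun y => c y i j) x
        (Pi.single j 1)) * fderiv ℝ u x (Pi.single i 1)) * p x := by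
    rw [Finset.sum_comm, Finset.sum_mul]
    simp only [Finset.sum_mul, hdc]
  have hlog : ∑ j, ∑ k, c x j k * fderiv ℝ u x (Pi.single k 1) * fderiv ℝ p x (Pi.single j 1) =
      (∑ i, (∑ j, c x i j * fderiv ℝ (fun y => Real.log (p y)) x (Pi.single j 1)) *
        fderiv ℝ u x (Pi.single i 1)) * p x := by
    rw [Finset.sum_comm, Finset.sum_mul]
    simp only [fderiv.log hp hpx, Finset.sum_mul, FunLike.coe_smul, Pi.smul_apply,
      smul_eq_mul]
    refine Finset.sum_congr rfl fun k _ => Finset.sum_congr rfl fun j _ => ?_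
    rw [hcx]
    field_simp
  have hhess : ∑ j, ∑ k, c x j k * fderiv ℝ (fun y => fderiv ℝ u y (Pi.single k 1)) x
      (Pi.single j 1) * p x = (∑ i, ∑ j, c x i j * fderiv ℝ (fun y => fderiv ℝ u y
        (Pi.single j 1)) x (Pi.single i 1)) * p x := by
    simp only [Finset.sum_mul]
  simp only [lineDeriv_flux_eq hc hp hu, Finset.sum_add_distrib, hdiv, hlog, hhess]
  simp only [generator, drift, add_mul, Finset.sum_add_distrib, mul_assoc, ← Finset.mul_sum]
  ring

theorem sum_lineDeriv_flux_eq_two_mul_generator_mul_of_isOpen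
    {c : (Fin d → ℝ) → Matrix (Fin d) (Fin d) ℝ} {p u : (Fin d → ℝ) → ℝ} {U : Set (Fin d → ℝ)}
    (hU : IsOpen U) (hsymm : ∀ y ∈ U, (c y).IsSymm)
    (hc : ∀ i j, ContDiffOn ℝ 1 (fun y => c y i j) U) (hp : ContDiffOn ℝ 1 p U)
    (hu : ContDiffOn ℝ 2 u U) {x : Fin d → ℝ} (hx : x ∈ U) (hpx : p x ≠ 0) :
    ∑ j, lineDeriv ℝ (fun y => ∑ k, c y j k * fderiv ℝ u y (Pi.single k 1) * p y) x
        (Pi.single j 1) = 2 * (generator c p u x * p x) := by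
  have hxU := hU.mem_nhds hx
  refine sum_lineDeriv_flux_eq_two_mul_generator_mul (eventually_of_mem hxU hsymm)
    (fun i j => ((hc i j).differentiableOn one_ne_zero).differentiableAt hxU)
    ((hp.differentiableOn one_ne_zero).differentiableAt hxU) hpx fun k => ?_
  exact (((hu.fderiv_of_isOpen hU (by norm_num)).differentiableOn one_ne_zero).differentiableAt
    hxU).clm_apply (differentiableAt_const _)

end Generator

theorem stmt_1_general {d : ℕ}
    (E : Set (Fin d → ℝ)) (hEopen : IsOpen E)
    (c : (Fin d → ℝ) → Matrix (Fin d) (Fin d) ℝ) (p : (Fin d → ℝ) → ℝ)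
    -- standing assumption on (c, p)
    (hc_pos : ∀ x ∈ E, (c x).PosDef)
    (hc_C1 : ∀ τ : Equiv.Perm (Fin d), ∀ i j, ContDiffOn ℝ 1 (fun x => c x i j) (cell E τ))
    (hp_pos : ∀ x ∈ E, 0 < p x)
    (hp_C1 : ∀ τ : Equiv.Perm (Fin d), ContDiffOn ℝ 1 p (cell E τ))
    -- u : continuous, compactly supported in E, C² on each cell
    (u : (Fin d → ℝ) → ℝ)
    (hu_supp : closure {x | u x ≠ 0} ⊆ E)
    (hu_comp : IsCompact (closure {x | u x ≠ 0}))
    (hu_C2 : ∀ τ : Equiv.Perm (Fin d), ContDiffOn ℝ 2 u (cell E τ))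
    -- the gradient of u extends to a continuous vector field G on E
    (G : (Fin d → ℝ) → Fin d → ℝ)
    (hG_cont : ContinuousOn G E)
    (hG_grad : ∀ τ : Equiv.Perm (Fin d), ∀ x ∈ cell E τ, ∀ i,
      G x i = fderiv ℝ u x (Pi.single i 1))
    -- c ∇u p is locally Lipschitz on E
    (hcGp_lip : ∀ K, K ⊆ E → IsCompact K →
      ∃ L : NNReal, ∀ i, LipschitzOnWith L (fun x => ∑ j, c x i j * G x j * p x) K) :
    ∀ v : (Fin d → ℝ) → ℝ, ContDiffOn ℝ 1 v E →
      (1 / 2 : ℝ) * ∫ x in E, (∑ i, ∑ j,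
          fderiv ℝ u x (Pi.single i 1) * c x i j * fderiv ℝ v x (Pi.single j 1)) * p x
        = - ∫ x in E, v x *
            -- Lu = bᵀ∇u + ½ tr(c ∇²u), with b = ½ div c + ½ c ∇ log p
            ((∑ i, ((1 / 2 : ℝ) * (∑ j, fderiv ℝ (fun y => c y i j) x (Pi.single j 1))
                  + (1 / 2 : ℝ) * ∑ j, c x i j *
                      fderiv ℝ (fun y => Real.log (p y)) x (Pi.single j 1))
                * fderiv ℝ u x (Pi.single i 1))
              + (1 / 2 : ℝ) * ∑ i, ∑ j, c x i j *
                  fderiv ℝ (fun y => fderiv ℝ u y (Pi.single j 1)) x (Pi.single i 1))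
            * p x := by
  intro v hv
  have hsymm : ∀ x ∈ E, (c x).IsSymm := fun x hx =>
    Matrix.isHermitian_iff_isSymm.1 (hc_pos x hx).isHermitian
  have hG0 := eqOn_zero_of_eq_fderiv_on_cells hEopen hG_cont hG_grad
  set F : Fin d → (Fin d → ℝ) → ℝ := fun i => E.indicator fun x => ∑ j, c x i j * G x j * p x
  have hF0 : ∀ i, ∀ x ∉ tsupport u, F i x = 0 := fun i x hx =>
    indicator_apply_eq_zero.2 fun hxE => by simp [hG0 ⟨hxE, hx⟩]
  have hFlip : ∀ i, ∃ M, LipschitzWith M (F i) := by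
    obtain ⟨δ, hδ, hKE⟩ := hu_comp.exists_cthickening_subset_open hEopen hu_supp
    obtain ⟨L, hL⟩ := hcGp_lip _ hKE hu_comp.cthickening
    exact fun i => LipschitzOnWith.exists_lipschitzWith_of_eq_zero_off hu_comp hδ
      (fun x hx y hy => by simpa [F, hKE hx, hKE hy] using hL i hx hy) (hF0 i)
  choose M hM using hFlip
  have hA : ∀ᵐ x ∂volume.restrict E, (∑ i, ∑ j, fderiv ℝ u x (Pi.single i 1) * c x i j *
      fderiv ℝ v x (Pi.single j 1)) * p x = ∑ j, fderiv ℝ v x (Pi.single j 1) * F j x := by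
    filter_upwards [ae_restrict_exists_mem_cell hEopen.measurableSet] with x ⟨τ, hx⟩
    simp only [F, indicator_of_mem hx.1, hG_grad τ x hx, Finset.mul_sum, Finset.sum_mul]
    rw [Finset.sum_comm]
    refine Finset.sum_congr rfl fun j _ => Finset.sum_congr rfl fun i _ => ?_
    rw [(hsymm x hx.1).apply j i]
    ring
  have hB : ∀ᵐ x ∂volume.restrict E, v x * ∑ j, lineDeriv ℝ (F j) x (Pi.single j 1) =
      2 * (v x * generator c p u x * p x) := by
    filter_upwards [ae_restrict_exists_mem_cell hEopen.measurableSet] with x ⟨τ, hx⟩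
    have hF : ∀ j, F j =ᶠ[𝓝 x] fun y => ∑ k, c y j k * fderiv ℝ u y (Pi.single k 1) * p y :=
      fun j => eventually_of_mem ((isOpen_cell hEopen τ).mem_nhds hx) fun y hy => by
        simp [F, hy.1, hG_grad τ y hy]
    rw [Finset.sum_congr rfl fun j _ => (hF j).lineDeriv_eq,
      sum_lineDeriv_flux_eq_two_mul_generator_mul_of_isOpen (isOpen_cell hEopen τ)
        (fun y hy => hsymm y hy.1) (hc_C1 τ) (hp_C1 τ) (hu_C2 τ) hx (hp_pos x hx.1).ne']
    ring
  change _ = -∫ x in E, v x * generator c p u x * p x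
  rw [integral_congr_ae hA, setIntegral_sum_fderiv_mul_eq_neg_mul_sum_lineDeriv volume hEopen
    hu_comp hu_supp hM hF0 hv, integral_congr_ae hB, integral_const_mul]
  ring

/-- **Theorem 2.2, second part:** `𝓔(u,v) = (-Lu, v)_{L²(E; p dx)}` for
`u ∈ C²_{𝒯,c}(E)`. -/
theorem stmt_1 {d : ℕ} (hd : 2 ≤ d)
    (E : Set (Fin d → ℝ)) (hEopen : IsOpen E) (hEne : E.Nonempty)
    (hEconn : IsConnected E)
    (c : (Fin d → ℝ) → Matrix (Fin d) (Fin d) ℝ) (p : (Fin d → ℝ) → ℝ)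
    -- standing assumption on (c, p)
    (hc_pos : ∀ x ∈ E, (c x).PosDef)
    (hc_cont : ∀ i j, ContinuousOn (fun x => c x i j) E)
    (hc_C1 : ∀ τ : Equiv.Perm (Fin d), ∀ i j, ContDiffOn ℝ 1 (fun x => c x i j) (cell E τ))
    (hp_pos : ∀ x ∈ E, 0 < p x)
    (hp_cont : ContinuousOn p E)
    (hp_C1 : ∀ τ : Equiv.Perm (Fin d), ContDiffOn ℝ 1 p (cell E τ))
    (hcp_lip : ∀ K, K ⊆ E → IsCompact K →
      ∃ L : NNReal, ∀ i j, LipschitzOnWith L (fun x => c x i j * p x) K)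
    -- u : continuous, compactly supported in E, C² on each cell
    (u : (Fin d → ℝ) → ℝ)
    (hu_cont : ContinuousOn u E)
    (hu_supp : closure {x | u x ≠ 0} ⊆ E)
    (hu_comp : IsCompact (closure {x | u x ≠ 0}))
    (hu_C2 : ∀ τ : Equiv.Perm (Fin d), ContDiffOn ℝ 2 u (cell E τ))
    -- the gradient of u extends to a continuous vector field G on E
    (G : (Fin d → ℝ) → Fin d → ℝ)
    (hG_cont : ContinuousOn G E)
    (hG_grad : ∀ τ : Equiv.Perm (Fin d), ∀ x ∈ cell E τ, ∀ i,
      G x i = fderiv ℝ u x (Pi.single i 1))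
    -- c ∇u p is locally Lipschitz on E
    (hcGp_lip : ∀ K, K ⊆ E → IsCompact K →
      ∃ L : NNReal, ∀ i, LipschitzOnWith L (fun x => ∑ j, c x i j * G x j * p x) K) :
    ∀ v : (Fin d → ℝ) → ℝ, ContDiffOn ℝ 1 v E →
      (1 / 2 : ℝ) * ∫ x in E, (∑ i, ∑ j,
          fderiv ℝ u x (Pi.single i 1) * c x i j * fderiv ℝ v x (Pi.single j 1)) * p x
        = - ∫ x in E, v x *
            -- Lu = bᵀ∇u + ½ tr(c ∇²u), with b = ½ div c + ½ c ∇ log p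
            ((∑ i, ((1 / 2 : ℝ) * (∑ j, fderiv ℝ (fun y => c y i j) x (Pi.single j 1))
                  + (1 / 2 : ℝ) * ∑ j, c x i j *
                      fderiv ℝ (fun y => Real.log (p y)) x (Pi.single j 1))
                * fderiv ℝ u x (Pi.single i 1))
              + (1 / 2 : ℝ) * ∑ i, ∑ j, c x i j *
                  fderiv ℝ (fun y => fderiv ℝ u y (Pi.single j 1)) x (Pi.single i 1))
            * p x :=
  stmt_1_general E hEopen c p hc_pos hc_C1 hp_pos hp_C1 u hu_supp hu_comp hu_C2 G hG_cont hG_grad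
    hcGp_lip
end

section
/- Let d ≥ 2 and let E ⊆ ℝ^d be a nonempty open connected set, and let (c,p) satisfy the standing assumption. Fix i ∈ {1,…,d} and a smooth compactly supported function φ : E → ℝ, and set u(x) := x_i φ(x). Then for every open set G whose closure is a compact subset of E there exists a finite constant C_G such that for every smooth function v : E → ℝ with compact support contained in G, |(1/2)∫_E (∇u(x))ᵀ c(x) ∇v(x) p(x) dx| ≤ C_G · sup_{x∈E}|v(x)|. -/
open MeasureTheory

/-- Auxiliary integrability criterion: a function continuous on an open set `W`,
vanishing off `W`, and dominated by the indicator of a compact set `S` times a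
constant, is integrable. -/
lemma aux_integrable {d : ℕ} {f : (Fin d → ℝ) → ℝ} {W : Set (Fin d → ℝ)}
    (hW : IsOpen W) (hf : ContinuousOn f W) (h0 : ∀ x ∉ W, f x = 0)
    {S : Set (Fin d → ℝ)} (hS : IsCompact S) {M : ℝ}
    (hb : ∀ x, |f x| ≤ S.indicator (fun _ => M) x) :
    Integrable f (volume : Measure (Fin d → ℝ)) := by
  have hfi : f = W.indicator f := by
    funext x; by_cases hx : x ∈ W
    · simp [Set.indicator_of_mem hx]
    · simp [Set.indicator_of_notMem hx, h0 x hx]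
  have hmeas : AEStronglyMeasurable f (volume : Measure (Fin d → ℝ)) := by
    rw [hfi]
    exact (aestronglyMeasurable_indicator_iff hW.measurableSet).2
      (hf.aestronglyMeasurable hW.measurableSet)
  have hgint : Integrable (S.indicator fun _ => M) (volume : Measure (Fin d → ℝ)) :=
    (integrable_indicator_iff hS.measurableSet).2
      (integrableOn_const hS.measure_lt_top.ne)
  exact hgint.mono' hmeas (Filter.Eventually.of_forall fun x => by
    simpa [Real.norm_eq_abs] using hb x)

/-- The key integration-by-parts type bound, proved via difference quotients and
translation invariance of Lebesgue measure. -/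
lemma key_bound {d : ℕ} {E K T : Set (Fin d → ℝ)} (hEopen : IsOpen E)
    (hKcpt : IsCompact K) (hTcpt : IsCompact T) (hKT : K ⊆ T) (hTE : T ⊆ E)
    {δ : ℝ} (hδpos : 0 < δ)
    (hT' : ∀ x y : Fin d → ℝ, y ∈ K → dist x y ≤ δ → x ∈ T)
    {F : (Fin d → ℝ) → ℝ} (hFcont : ContinuousOn F E)
    {MF : ℝ} (hMF : 0 ≤ MF) (hFbd : ∀ x ∈ T, |F x| ≤ MF)
    {L' : ℝ} (hL' : 0 ≤ L')
    (hFlip : ∀ x ∈ K, ∀ w : Fin d → ℝ, ‖w‖ ≤ δ → |F (x - w) - F x| ≤ L' * ‖w‖)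
    {v : (Fin d → ℝ) → ℝ} (hv : ContDiff ℝ (⊤ : ℕ∞) v) (hvK : tsupport v ⊆ K)
    {Mv : ℝ} (hMv0 : 0 ≤ Mv) (hMv : ∀ x ∈ tsupport v, |v x| ≤ Mv)
    {e : Fin d → ℝ} (he : ‖e‖ = 1) :
    Integrable (fun x => F x * fderiv ℝ v x e) (volume : Measure (Fin d → ℝ)) ∧
      |∫ x, F x * fderiv ℝ v x e| ≤ (volume K).toReal * (L' * Mv) := by
  have hvE : tsupport v ⊆ E := hvK.trans (hKT.trans hTE)
  -- global bound on |v|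
  obtain ⟨Bv0, hBv0⟩ := hKcpt.exists_bound_of_continuousOn hv.continuous.continuousOn
  set Bv := max Bv0 0 with hBv_def
  have hBvnn : 0 ≤ Bv := le_max_right _ _
  have hBv : ∀ x, |v x| ≤ Bv := by
    intro x; by_cases hx : x ∈ tsupport v
    · exact le_trans (by simpa [Real.norm_eq_abs] using hBv0 x (hvK hx)) (le_max_left _ _)
    · rw [image_eq_zero_of_notMem_tsupport hx, abs_zero]; exact hBvnn
  have hdv : Differentiable ℝ v := hv.differentiable (by simp)
  have hDvcont : Continuous (fderiv ℝ v) := (hv.fderiv_right (m := (⊤ : ℕ∞)) (by simp)).continuous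
  have hDv0 : ∀ x, x ∉ tsupport v → fderiv ℝ v x = 0 := fun x hx =>
    Function.notMem_support.1 fun h => hx (support_fderiv_subset ℝ h)
  obtain ⟨Mv'0, hMv'0⟩ := hKcpt.exists_bound_of_continuousOn hDvcont.continuousOn
  set Mv' := max Mv'0 0 with hMv'_def
  have hMv'nn : 0 ≤ Mv' := le_max_right _ _
  have hMv' : ∀ x, ‖fderiv ℝ v x‖ ≤ Mv' := by
    intro x; by_cases hx : x ∈ tsupport v
    · exact (hMv'0 x (hvK hx)).trans (le_max_left _ _)
    · rw [hDv0 x hx, norm_zero]; exact hMv'nn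
  have hvMVT : ∀ x y : Fin d → ℝ, |v y - v x| ≤ Mv' * ‖y - x‖ := by
    intro x y
    have := Convex.norm_image_sub_le_of_norm_fderiv_le (𝕜 := ℝ) (f := v)
      (fun z _ => hdv z) (fun z _ => hMv' z) convex_univ (Set.mem_univ x) (Set.mem_univ y)
    simpa [Real.norm_eq_abs] using this
  have hDve : ∀ x, |fderiv ℝ v x e| ≤ Mv' := by
    intro x
    calc |fderiv ℝ v x e| ≤ ‖fderiv ℝ v x‖ * ‖e‖ := by
          simpa [Real.norm_eq_abs] using (fderiv ℝ v x).le_opNorm e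
      _ = ‖fderiv ℝ v x‖ := by rw [he, mul_one]
      _ ≤ Mv' := hMv' x
  -- integrability of the target function
  have hint : Integrable (fun x => F x * fderiv ℝ v x e) (volume : Measure (Fin d → ℝ)) := by
    apply aux_integrable hEopen
      (hFcont.mul ((hDvcont.clm_apply continuous_const).continuousOn)) ?_ hKcpt
      (M := MF * Mv')
    · intro x
      simp only [Pi.mul_apply]
      by_cases hx : x ∈ tsupport v
      · have hxK : x ∈ K := hvK hx
        rw [Set.indicator_of_mem hxK, abs_mul]
        exact mul_le_mul (hFbd x (hKT hxK)) (hDve x) (abs_nonneg _) hMF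
      · rw [hDv0 x hx]
        by_cases hxK : x ∈ K
        · rw [Set.indicator_of_mem hxK]; simpa using mul_nonneg hMF hMv'nn
        · rw [Set.indicator_of_notMem hxK]; simp
    · intro x hx
      have hx' : x ∉ tsupport v := fun h => hx (hvE h)
      simp only [Pi.mul_apply]; rw [hDv0 x hx']; simp
  refine ⟨hint, ?_⟩
  -- eventual smallness of h
  have hev : ∀ᶠ h in nhdsWithin (0:ℝ) {0}ᶜ, |h| ≤ δ ∧ h ≠ 0 := by
    have h1 : ∀ᶠ h in nhds (0:ℝ), |h| ≤ δ := by
      filter_upwards [Metric.closedBall_mem_nhds (0:ℝ) hδpos] with h hh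
      simpa [Real.dist_eq] using hh
    exact (h1.filter_mono nhdsWithin_le_nhds).and
      (by filter_upwards [eventually_mem_nhdsWithin] with h hh using hh)
  -- the difference quotient family
  set Φ : ℝ → (Fin d → ℝ) → ℝ := fun h x => F x * ((v (x + h • e) - v x) / h) with hΦdef
  have hnorm_smul : ∀ h : ℝ, ‖h • e‖ = |h| := by
    intro h; rw [norm_smul, he, Real.norm_eq_abs, mul_one]
  have hself : ∀ x, v x ≠ 0 → x ∈ K := fun x hx =>
    hvK (subset_tsupport v (Function.mem_support.2 hx))
  have hshift : ∀ (h : ℝ), |h| ≤ δ → ∀ x, v (x + h • e) ≠ 0 → x ∈ T := by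
    intro h hh x hne'
    have hxK : x + h • e ∈ K := hself _ hne'
    refine hT' x (x + h • e) hxK ?_
    rw [dist_eq_norm]
    have hx' : x - (x + h • e) = -(h • e) := by abel
    rw [hx', norm_neg, hnorm_smul]; exact hh
  have hΦsupp : ∀ (h : ℝ), |h| ≤ δ → ∀ x, x ∉ T → Φ h x = 0 := by
    intro h hh x hx
    have hx1 : v x = 0 := by
      by_contra hne; exact hx (hKT (hself x hne))
    have hx2 : v (x + h • e) = 0 := by
      by_contra hne; exact hx (hshift h hh x hne)
    simp [hΦdef, hx1, hx2]
  have hΦbd : ∀ (h : ℝ), |h| ≤ δ → h ≠ 0 →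
      ∀ x, |Φ h x| ≤ T.indicator (fun _ => MF * Mv') x := by
    intro h hh hne x
    by_cases hx : x ∈ T
    · rw [Set.indicator_of_mem hx]
      have h1 : |F x| ≤ MF := hFbd x hx
      have h2 : |(v (x + h • e) - v x) / h| ≤ Mv' := by
        rw [abs_div, div_le_iff₀ (abs_pos.2 hne)]
        calc |v (x + h • e) - v x| ≤ Mv' * ‖x + h • e - x‖ := hvMVT x (x + h • e)
          _ = Mv' * |h| := by rw [add_sub_cancel_left, hnorm_smul]
      calc |Φ h x| = |F x| * |(v (x + h • e) - v x) / h| := by rw [hΦdef, abs_mul]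
        _ ≤ MF * Mv' := mul_le_mul h1 h2 (abs_nonneg _) hMF
    · rw [Set.indicator_of_notMem hx, hΦsupp h hh x hx, abs_zero]
  have hΦint : ∀ (h : ℝ), |h| ≤ δ → h ≠ 0 →
      Integrable (Φ h) (volume : Measure (Fin d → ℝ)) := by
    intro h hh hne
    refine aux_integrable hEopen ?_ (fun x hx => hΦsupp h hh x fun hT => hx (hTE hT))
      hTcpt (hΦbd h hh hne)
    exact hFcont.mul
      (((hv.continuous.comp (continuous_id.add continuous_const)).sub
        hv.continuous).div_const h).continuousOn
  -- dominated convergence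
  have hlim : Filter.Tendsto (fun h => ∫ x, Φ h x) (nhdsWithin (0:ℝ) {0}ᶜ)
      (nhds (∫ x, F x * fderiv ℝ v x e)) := by
    apply tendsto_integral_filter_of_dominated_convergence
      (bound := T.indicator fun _ => MF * Mv')
    · filter_upwards [hev] with h hh
      exact (hΦint h hh.1 hh.2).aestronglyMeasurable
    · filter_upwards [hev] with h hh
      exact ae_of_all _ fun x => by
        simpa [Real.norm_eq_abs] using hΦbd h hh.1 hh.2 x
    · exact (integrable_indicator_iff hTcpt.measurableSet).2
        (integrableOn_const hTcpt.measure_lt_top.ne)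
    · refine ae_of_all _ fun x => ?_
      have hx0 : x + (0:ℝ) • e = x := by simp
      have h1 : HasFDerivAt v (fderiv ℝ v x) (x + (0:ℝ) • e) := by
        rw [hx0]; exact (hdv x).hasFDerivAt
      have h2 : HasDerivAt (fun t : ℝ => x + t • e) e 0 := by
        simpa using ((hasDerivAt_id (0:ℝ)).smul_const e).const_add x
      have hder : HasDerivAt (fun t : ℝ => v (x + t • e)) (fderiv ℝ v x e) 0 := by
        exact h1.comp_hasDerivAt 0 h2
      rw [hasDerivAt_iff_tendsto_slope] at hder
      have heq : (fun h : ℝ => (v (x + h • e) - v x) / h)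
          = slope (fun t : ℝ => v (x + t • e)) 0 := by
        funext h
        rw [slope_def_field]
        simp
      have hconv : Filter.Tendsto (fun h : ℝ => (v (x + h • e) - v x) / h)
          (nhdsWithin 0 {0}ᶜ) (nhds (fderiv ℝ v x e)) := by rw [heq]; exact hder
      simpa [hΦdef] using hconv.const_mul (F x)
  -- eventual bound on the integrals
  have hbound : ∀ᶠ h in nhdsWithin (0:ℝ) {0}ᶜ,
      |∫ x, Φ h x| ≤ (volume K).toReal * (L' * Mv) := by
    filter_upwards [hev] with h hh
    obtain ⟨hhδ, hne⟩ := hh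
    have habs : (0:ℝ) < |h| := abs_pos.2 hne
    have hwnorm : ‖h • e‖ ≤ δ := by rw [hnorm_smul]; exact hhδ
    -- integrable pieces
    have hint1 : Integrable (fun x => F x * v (x + h • e)) (volume : Measure (Fin d → ℝ)) := by
      refine aux_integrable hEopen
        (hFcont.mul (hv.continuous.comp (continuous_id.add continuous_const)).continuousOn)
        ?_ hTcpt (M := MF * Bv) ?_
      · intro x hx
        have hz : v (x + h • e) = 0 := by
          by_contra hne'; exact hx (hTE (hshift h hhδ x hne'))
        rw [hz, mul_zero]
      · intro x
        by_cases hx : x ∈ T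
        · rw [Set.indicator_of_mem hx, abs_mul]
          exact mul_le_mul (hFbd x hx) (hBv _) (abs_nonneg _) hMF
        · rw [Set.indicator_of_notMem hx]
          have hz : v (x + h • e) = 0 := by
            by_contra hne'; exact hx (hshift h hhδ x hne')
          rw [hz, mul_zero, abs_zero]
    have hint2 : Integrable (fun x => F x * v x) (volume : Measure (Fin d → ℝ)) := by
      refine aux_integrable hEopen (hFcont.mul hv.continuous.continuousOn) ?_ hKcpt
        (M := MF * Bv) ?_
      · intro x hx
        have hz : v x = 0 := by by_contra hne'; exact hx (hTE (hKT (hself x hne')))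
        rw [hz, mul_zero]
      · intro x
        by_cases hx : x ∈ K
        · rw [Set.indicator_of_mem hx, abs_mul]
          exact mul_le_mul (hFbd x (hKT hx)) (hBv _) (abs_nonneg _) hMF
        · rw [Set.indicator_of_notMem hx]
          have hz : v x = 0 := by by_contra hne'; exact hx (hself x hne')
          rw [hz, mul_zero, abs_zero]
    have hmemT : ∀ x, v x ≠ 0 → x - h • e ∈ T := by
      intro x hne'
      refine hT' (x - h • e) x (hself x hne') ?_
      rw [dist_eq_norm]
      have hx' : x - h • e - x = -(h • e) := by abel
      rw [hx', norm_neg]; exact hwnorm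
    have hint3 : Integrable (fun x => F (x - h • e) * v x) (volume : Measure (Fin d → ℝ)) := by
      refine aux_integrable (W := (fun x : Fin d → ℝ => x - h • e) ⁻¹' E)
        (hEopen.preimage (continuous_id.sub continuous_const))
        (ContinuousOn.mul
          (hFcont.comp (continuous_id.sub continuous_const).continuousOn fun x hx => hx)
          hv.continuous.continuousOn)
        ?_ hKcpt (M := MF * Bv) ?_
      · intro x hx
        have hz : v x = 0 := by
          by_contra hne'
          exact hx (Set.mem_preimage.2 (hTE (hmemT x hne')))
        rw [hz, mul_zero]
      · intro x
        by_cases hx : v x = 0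
        · rw [hx, mul_zero, abs_zero]
          by_cases hxK : x ∈ K
          · rw [Set.indicator_of_mem hxK]; exact mul_nonneg hMF hBvnn
          · rw [Set.indicator_of_notMem hxK]
        · have hxK : x ∈ K := hself x hx
          rw [Set.indicator_of_mem hxK, abs_mul]
          exact mul_le_mul (hFbd _ (hmemT x hx)) (hBv _) (abs_nonneg _) hMF
    -- the translation identity
    have e2 : ∫ x, F x * v (x + h • e) = ∫ x, F (x - h • e) * v x := by
      have ht := integral_add_right_eq_self (μ := (volume : Measure (Fin d → ℝ)))
        (fun x => F (x - h • e) * v x) (h • e)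
      simpa [add_sub_cancel_right] using ht
    have e1 : ∫ x, Φ h x = (1/h) * (∫ x, F x * v (x + h • e)) - (1/h) * ∫ x, F x * v x := by
      have hfun : Φ h = fun x => (1/h) * (F x * v (x + h • e)) - (1/h) * (F x * v x) := by
        funext x; rw [hΦdef]; field_simp
      rw [hfun, integral_sub (hint1.const_mul _) (hint2.const_mul _),
        integral_const_mul, integral_const_mul]
    have e3 : ∫ x, Φ h x = (1/h) * (∫ x, (F (x - h • e) - F x) * v x) := by
      have hsplit : ∫ x, (F (x - h • e) - F x) * v x
          = (∫ x, F (x - h • e) * v x) - ∫ x, F x * v x := by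
        rw [← integral_sub hint3 hint2]
        congr 1; funext x; ring
      rw [e1, e2, hsplit, mul_sub]
    -- bound the difference integral
    have e4 : |∫ x, (F (x - h • e) - F x) * v x|
        ≤ (volume K).toReal * (L' * (|h| * Mv)) := by
      have hbd : ∀ x, ‖(F (x - h • e) - F x) * v x‖
          ≤ K.indicator (fun _ => L' * (|h| * Mv)) x := by
        intro x
        rw [Real.norm_eq_abs]
        by_cases hx : x ∈ tsupport v
        · have hxK := hvK hx
          rw [Set.indicator_of_mem hxK, abs_mul]
          have h1 : |F (x - h • e) - F x| ≤ L' * |h| := by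
            calc |F (x - h • e) - F x| ≤ L' * ‖h • e‖ := hFlip x hxK (h • e) hwnorm
              _ = L' * |h| := by rw [hnorm_smul]
          calc |F (x - h • e) - F x| * |v x| ≤ (L' * |h|) * Mv :=
                mul_le_mul h1 (hMv x hx) (abs_nonneg _)
                  (mul_nonneg hL' (abs_nonneg _))
            _ = L' * (|h| * Mv) := by ring
        · rw [image_eq_zero_of_notMem_tsupport hx, mul_zero, abs_zero]
          by_cases hxK : x ∈ K
          · rw [Set.indicator_of_mem hxK]
            exact mul_nonneg hL' (mul_nonneg (abs_nonneg _) hMv0)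
          · rw [Set.indicator_of_notMem hxK]
      have hgi : Integrable (K.indicator fun _ : Fin d → ℝ => L' * (|h| * Mv))
          (volume : Measure (Fin d → ℝ)) :=
        (integrable_indicator_iff hKcpt.measurableSet).2
          (integrableOn_const hKcpt.measure_lt_top.ne)
      calc |∫ x, (F (x - h • e) - F x) * v x|
          = ‖∫ x, (F (x - h • e) - F x) * v x‖ := (Real.norm_eq_abs _).symm
        _ ≤ ∫ x, K.indicator (fun _ => L' * (|h| * Mv)) x :=
            norm_integral_le_of_norm_le hgi (ae_of_all _ hbd)
        _ = (volume K).toReal * (L' * (|h| * Mv)) := by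
            rw [integral_indicator_const _ hKcpt.measurableSet, smul_eq_mul]; rfl
    have h5 : |1/h| * |h| = 1 := by
      rw [← abs_mul, one_div, inv_mul_cancel₀ hne, abs_one]
    calc |∫ x, Φ h x| = |1/h| * |∫ x, (F (x - h • e) - F x) * v x| := by
          rw [e3, abs_mul]
      _ ≤ |1/h| * ((volume K).toReal * (L' * (|h| * Mv))) :=
          mul_le_mul_of_nonneg_left e4 (abs_nonneg _)
      _ = (|1/h| * |h|) * ((volume K).toReal * (L' * Mv)) := by ring
      _ = (volume K).toReal * (L' * Mv) := by rw [h5, one_mul]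
  exact le_of_tendsto hlim.abs hbound

/-- **Fukushima semimartingale criterion (proof of Proposition 3.4):** for
`u(x) = x i * φ x` with `φ` smooth and compactly supported in `E`, the Dirichlet
form satisfies `|𝓔(u,v)| ≤ C_G ‖v‖_∞` for all smooth `v` supported in `G`. -/
theorem stmt_3 {d : ℕ} (hd : 2 ≤ d)
    (E : Set (Fin d → ℝ)) (hEopen : IsOpen E) (hEne : E.Nonempty)
    (hEconn : IsConnected E)
    (c : (Fin d → ℝ) → Matrix (Fin d) (Fin d) ℝ) (p : (Fin d → ℝ) → ℝ)
    -- standing assumption on (c, p)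
    (hc_pos : ∀ x ∈ E, (c x).PosDef)
    (hc_cont : ∀ i j, ContinuousOn (fun x => c x i j) E)
    (hc_C1 : ∀ τ : Equiv.Perm (Fin d), ∀ i j, ContDiffOn ℝ 1 (fun x => c x i j) (cell E τ))
    (hp_pos : ∀ x ∈ E, 0 < p x)
    (hp_cont : ContinuousOn p E)
    (hp_C1 : ∀ τ : Equiv.Perm (Fin d), ContDiffOn ℝ 1 p (cell E τ))
    (hcp_lip : ∀ K, K ⊆ E → IsCompact K →
      ∃ L : NNReal, ∀ i j, LipschitzOnWith L (fun x => c x i j * p x) K)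
    -- the fixed coordinate index and the smooth cutoff φ
    (i : Fin d) (φ : (Fin d → ℝ) → ℝ)
    (hφ : ContDiff ℝ (⊤ : ℕ∞) φ) (hφ_comp : HasCompactSupport φ) (hφ_supp : tsupport φ ⊆ E) :
    ∀ G : Set (Fin d → ℝ), IsOpen G → IsCompact (closure G) → closure G ⊆ E →
      ∃ C : ℝ, ∀ v : (Fin d → ℝ) → ℝ, ContDiff ℝ (⊤ : ℕ∞) v → tsupport v ⊆ G →
        |(1 / 2 : ℝ) * ∫ x in E, ∑ a, ∑ b,
            fderiv ℝ (fun y => y i * φ y) x (Pi.single a 1) * c x a b *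
              fderiv ℝ v x (Pi.single b 1) * p x|
          ≤ C * ⨆ x ∈ E, |v x| := by
  intro G hGopen hKcpt hKE
  classical
  set u : (Fin d → ℝ) → ℝ := fun y => y i * φ y with hu_def
  have hu : ContDiff ℝ (⊤ : ℕ∞) u := (contDiff_pi.mp contDiff_id i).mul hφ
  set K : Set (Fin d → ℝ) := closure G with hK_def
  obtain ⟨K', hK'cpt, hKK', hK'E⟩ := exists_compact_between hKcpt hEopen hKE
  obtain ⟨L, hL⟩ := hcp_lip K' hK'E hK'cpt
  obtain ⟨δ₀, hδ₀pos, hδ₀⟩ := hKcpt.exists_thickening_subset_open isOpen_interior hKK'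
  set δ : ℝ := δ₀ / 2 with hδ_def
  have hδpos : 0 < δ := by positivity
  set T : Set (Fin d → ℝ) := Metric.cthickening δ K with hT_def
  have hTsub : T ⊆ interior K' :=
    (Metric.cthickening_subset_thickening' hδ₀pos (by simp [hδ_def]; linarith) K).trans hδ₀
  have hTcpt : IsCompact T := hKcpt.cthickening
  have hTK' : T ⊆ K' := hTsub.trans interior_subset
  have hTE : T ⊆ E := hTK'.trans hK'E
  have hKT : K ⊆ T := Metric.self_subset_cthickening K
  have hT' : ∀ x y : Fin d → ℝ, y ∈ K → dist x y ≤ δ → x ∈ T := fun x y hy hdxy =>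
    Metric.mem_cthickening_of_dist_le x y δ K hy hdxy
  have hsingle_norm : ∀ b : Fin d, ‖(Pi.single b (1:ℝ) : Fin d → ℝ)‖ = 1 := fun b => by
    rw [Pi.norm_single]; exact norm_one
  -- derivative data for u
  set D : Fin d → (Fin d → ℝ) → ℝ := fun a x => fderiv ℝ u x (Pi.single a 1) with hD
  set g : Fin d → Fin d → (Fin d → ℝ) → ℝ := fun a b x => c x a b * p x with hg
  set F : Fin d → (Fin d → ℝ) → ℝ := fun b x => ∑ a, D a x * g a b x with hF
  have hu' : ContDiff ℝ (⊤ : ℕ∞) (fderiv ℝ u) := hu.fderiv_right (m := (⊤ : ℕ∞)) (by simp)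
  obtain ⟨Mu0, hMu0⟩ := hTcpt.exists_bound_of_continuousOn hu'.continuous.continuousOn
  set Mu := max Mu0 0 with hMu_def
  have hMu_nn : 0 ≤ Mu := le_max_right _ _
  have hMu : ∀ x ∈ T, ‖fderiv ℝ u x‖ ≤ Mu := fun x hx => (hMu0 x hx).trans (le_max_left _ _)
  obtain ⟨Mu'0, hMu'0⟩ := hTcpt.exists_bound_of_continuousOn
    (hu'.fderiv_right (m := (⊤ : ℕ∞)) (by simp)).continuous.continuousOn
  set Mu' := max Mu'0 0 with hMu'_def
  have hMu'_nn : 0 ≤ Mu' := le_max_right _ _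
  have hMu' : ∀ x ∈ T, ‖fderiv ℝ (fderiv ℝ u) x‖ ≤ Mu' := fun x hx =>
    (hMu'0 x hx).trans (le_max_left _ _)
  have hDbd : ∀ a, ∀ x ∈ T, |D a x| ≤ Mu := by
    intro a x hx
    calc |D a x| ≤ ‖fderiv ℝ u x‖ * ‖(Pi.single a 1 : Fin d → ℝ)‖ := by
          simpa [Real.norm_eq_abs] using (fderiv ℝ u x).le_opNorm (Pi.single a 1)
      _ = ‖fderiv ℝ u x‖ := by rw [hsingle_norm, mul_one]
      _ ≤ Mu := hMu x hx
  have hdistw : ∀ x w : Fin d → ℝ, dist (x - w) x = ‖w‖ := by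
    intro x w; rw [dist_eq_norm]; simp
  have hDlip : ∀ a, ∀ x ∈ K, ∀ w : Fin d → ℝ, ‖w‖ ≤ δ →
      |D a (x - w) - D a x| ≤ Mu' * ‖w‖ := by
    intro a x hxK w hw
    have hseg : segment ℝ (x - w) x ⊆ T := by
      have h1 : x - w ∈ Metric.closedBall x δ := by
        rw [Metric.mem_closedBall, hdistw]; exact hw
      have h2 : x ∈ Metric.closedBall x δ := Metric.mem_closedBall_self hδpos.le
      intro z hz
      have hzb := (convex_closedBall x δ).segment_subset h1 h2 hz
      exact hT' z x hxK (Metric.mem_closedBall.1 hzb)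
    have hmvt := Convex.norm_image_sub_le_of_norm_fderiv_le (𝕜 := ℝ) (f := fderiv ℝ u)
      (fun z _ => (hu'.differentiable (by simp)) z)
      (fun z hz => hMu' z (hseg hz)) (convex_segment _ _)
      (left_mem_segment ℝ (x - w) x) (right_mem_segment ℝ (x - w) x)
    calc |D a (x - w) - D a x|
        = |(fderiv ℝ u (x - w) - fderiv ℝ u x) (Pi.single a 1)| := by
          simp [hD, ContinuousLinearMap.sub_apply]
      _ ≤ ‖fderiv ℝ u (x - w) - fderiv ℝ u x‖ * ‖(Pi.single a 1 : Fin d → ℝ)‖ := by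
          simpa [Real.norm_eq_abs] using
            (fderiv ℝ u (x - w) - fderiv ℝ u x).le_opNorm (Pi.single a 1)
      _ = ‖fderiv ℝ u (x - w) - fderiv ℝ u x‖ := by rw [hsingle_norm, mul_one]
      _ = ‖fderiv ℝ u x - fderiv ℝ u (x - w)‖ := norm_sub_rev _ _
      _ ≤ Mu' * ‖x - (x - w)‖ := hmvt
      _ = Mu' * ‖w‖ := by rw [sub_sub_cancel]
  -- uniform bound on g over K'
  choose Mc0 hMc0 using fun a b =>
    hK'cpt.exists_bound_of_continuousOn (((hc_cont a b).mono hK'E).mul (hp_cont.mono hK'E))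
  set Mc : ℝ := ∑ a : Fin d, ∑ b : Fin d, max (Mc0 a b) 0 with hMc_def
  have hMc_nn : 0 ≤ Mc :=
    Finset.sum_nonneg fun a _ => Finset.sum_nonneg fun b _ => le_max_right _ _
  have hMc : ∀ a b, ∀ x ∈ K', |g a b x| ≤ Mc := by
    intro a b x hx
    calc |g a b x| ≤ Mc0 a b := by simpa only [Real.norm_eq_abs, Pi.mul_apply] using hMc0 a b x hx
      _ ≤ max (Mc0 a b) 0 := le_max_left _ _
      _ ≤ ∑ b' : Fin d, max (Mc0 a b') 0 :=
          Finset.single_le_sum (f := fun b' => max (Mc0 a b') 0)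
            (fun b' _ => le_max_right _ _) (Finset.mem_univ b)
      _ ≤ Mc :=
          Finset.single_le_sum (f := fun a' => ∑ b' : Fin d, max (Mc0 a' b') 0)
            (fun a' _ => Finset.sum_nonneg fun b' _ => le_max_right _ _) (Finset.mem_univ a)
  have hglip : ∀ a b, ∀ x ∈ K, ∀ w : Fin d → ℝ, ‖w‖ ≤ δ →
      |g a b (x - w) - g a b x| ≤ (L : ℝ) * ‖w‖ := by
    intro a b x hxK w hw
    have hx1 : x - w ∈ K' := hTK' (hT' (x - w) x hxK (by rw [hdistw]; exact hw))
    have hx2 : x ∈ K' := hTK' (hKT hxK)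
    have hlip := (hL a b).dist_le_mul (x - w) hx1 x hx2
    rw [Real.dist_eq, hdistw] at hlip
    simpa [hg] using hlip
  -- the coefficient functions
  set L' : ℝ := d * (Mu * (L : ℝ) + Mc * Mu') with hL'_def
  have hL'nn : 0 ≤ L' :=
    mul_nonneg (Nat.cast_nonneg d)
      (add_nonneg (mul_nonneg hMu_nn L.coe_nonneg) (mul_nonneg hMc_nn hMu'_nn))
  set MF : ℝ := d * (Mu * Mc) with hMF_def
  have hMFnn : 0 ≤ MF := mul_nonneg (Nat.cast_nonneg d) (mul_nonneg hMu_nn hMc_nn)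
  have hFbd : ∀ b, ∀ x ∈ T, |F b x| ≤ MF := by
    intro b x hxT
    calc |F b x| ≤ ∑ a, |D a x * g a b x| := Finset.abs_sum_le_sum_abs _ _
      _ ≤ ∑ _a : Fin d, Mu * Mc := Finset.sum_le_sum fun a _ => by
          rw [abs_mul]
          exact mul_le_mul (hDbd a x hxT) (hMc a b x (hTK' hxT)) (abs_nonneg _) hMu_nn
      _ = MF := by simp [Finset.sum_const, Finset.card_univ, nsmul_eq_mul, hMF_def]
  have hFlip : ∀ b, ∀ x ∈ K, ∀ w : Fin d → ℝ, ‖w‖ ≤ δ →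
      |F b (x - w) - F b x| ≤ L' * ‖w‖ := by
    intro b x hxK w hw
    have hyT : x - w ∈ T := hT' (x - w) x hxK (by rw [hdistw]; exact hw)
    have hterm : ∀ a : Fin d,
        |D a (x - w) * g a b (x - w) - D a x * g a b x| ≤ (Mu * (L:ℝ) + Mc * Mu') * ‖w‖ := by
      intro a
      have key : D a (x - w) * g a b (x - w) - D a x * g a b x
          = D a (x - w) * (g a b (x - w) - g a b x) + g a b x * (D a (x - w) - D a x) := by
        ring
      rw [key]
      calc |D a (x - w) * (g a b (x - w) - g a b x) + g a b x * (D a (x - w) - D a x)|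
          ≤ |D a (x - w) * (g a b (x - w) - g a b x)|
            + |g a b x * (D a (x - w) - D a x)| := abs_add_le _ _
        _ ≤ Mu * ((L:ℝ) * ‖w‖) + Mc * (Mu' * ‖w‖) := by
            rw [abs_mul, abs_mul]
            exact add_le_add
              (mul_le_mul (hDbd a _ hyT) (hglip a b x hxK w hw) (abs_nonneg _) hMu_nn)
              (mul_le_mul (hMc a b x (hTK' (hKT hxK))) (hDlip a x hxK w hw)
                (abs_nonneg _) hMc_nn)
        _ = (Mu * (L:ℝ) + Mc * Mu') * ‖w‖ := by ring
    calc |F b (x - w) - F b x|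
        = |∑ a, (D a (x - w) * g a b (x - w) - D a x * g a b x)| := by
          rw [hF, ← Finset.sum_sub_distrib]
      _ ≤ ∑ a, |D a (x - w) * g a b (x - w) - D a x * g a b x| :=
          Finset.abs_sum_le_sum_abs _ _
      _ ≤ ∑ _a : Fin d, (Mu * (L:ℝ) + Mc * Mu') * ‖w‖ :=
          Finset.sum_le_sum fun a _ => hterm a
      _ = L' * ‖w‖ := by
          simp [Finset.sum_const, Finset.card_univ, nsmul_eq_mul, hL'_def]; ring
  have hDcont : ∀ a, Continuous (D a) := fun a =>
    hu'.continuous.clm_apply continuous_const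
  have hFcont : ∀ b, ContinuousOn (F b) E := fun b => by
    apply continuousOn_finset_sum
    intro a _
    exact (hDcont a).continuousOn.mul ((hc_cont a b).mul hp_cont)
  -- the constant
  refine ⟨(1/2 : ℝ) * d * ((volume K).toReal * L'), ?_⟩
  intro v hv hvsupp
  have hvK : tsupport v ⊆ K := hvsupp.trans subset_closure
  have hvE : tsupport v ⊆ E := fun x hx => hKE (hvK hx)
  -- the sup norm
  obtain ⟨Bv0, hBv0⟩ := hKcpt.exists_bound_of_continuousOn hv.continuous.continuousOn
  set Bv := max Bv0 0 with hBv_def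
  have hBv : ∀ x, |v x| ≤ Bv := by
    intro x; by_cases hx : x ∈ tsupport v
    · exact le_trans (by simpa [Real.norm_eq_abs] using hBv0 x (hvK hx)) (le_max_left _ _)
    · rw [image_eq_zero_of_notMem_tsupport hx, abs_zero]; exact le_max_right _ _
  have hbdd : BddAbove (Set.range fun x => ⨆ _ : x ∈ E, |v x|) := by
    refine ⟨Bv, ?_⟩
    rintro y ⟨x, rfl⟩
    show (⨆ _ : x ∈ E, |v x|) ≤ Bv
    by_cases hx : x ∈ E
    · haveI : Nonempty (x ∈ E) := ⟨hx⟩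
      rw [ciSup_const]; exact hBv x
    · haveI : IsEmpty (x ∈ E) := ⟨hx⟩
      rw [Real.iSup_of_isEmpty]; exact le_max_right _ _
  have hMvE : ∀ x ∈ E, |v x| ≤ ⨆ x ∈ E, |v x| := by
    intro x hx
    haveI : Nonempty (x ∈ E) := ⟨hx⟩
    calc |v x| = ⨆ _ : x ∈ E, |v x| := ciSup_const.symm
      _ ≤ ⨆ x ∈ E, |v x| := le_ciSup hbdd x
  have hMv0 : 0 ≤ ⨆ x ∈ E, |v x| :=
    le_trans (abs_nonneg _) (hMvE hEne.choose hEne.choose_spec)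
  have hMvsupp : ∀ x ∈ tsupport v, |v x| ≤ ⨆ x ∈ E, |v x| := fun x hx => hMvE x (hvE hx)
  -- apply the key bound for each b
  have hkey := fun b : Fin d =>
    key_bound hEopen hKcpt hTcpt hKT hTE hδpos hT' (hFcont b) hMFnn (hFbd b) hL'nn
      (hFlip b) hv hvK hMv0 hMvsupp (hsingle_norm b)
  have hDv0 : ∀ x, x ∉ tsupport v → fderiv ℝ v x = 0 := fun x hx =>
    Function.notMem_support.1 fun h => hx (support_fderiv_subset ℝ h)
  have hpt : ∀ x, (∑ a, ∑ b, fderiv ℝ u x (Pi.single a 1) * c x a b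
        * fderiv ℝ v x (Pi.single b 1) * p x)
      = ∑ b, F b x * fderiv ℝ v x (Pi.single b 1) := by
    intro x
    rw [Finset.sum_comm]
    refine Finset.sum_congr rfl fun b _ => ?_
    rw [hF, Finset.sum_mul]
    refine Finset.sum_congr rfl fun a _ => ?_
    simp only [hD, hg]; ring
  have hset : (∫ x in E, ∑ a, ∑ b, fderiv ℝ u x (Pi.single a 1) * c x a b
        * fderiv ℝ v x (Pi.single b 1) * p x)
      = ∑ b, ∫ x, F b x * fderiv ℝ v x (Pi.single b 1) := by
    calc (∫ x in E, ∑ a, ∑ b, fderiv ℝ u x (Pi.single a 1) * c x a b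
          * fderiv ℝ v x (Pi.single b 1) * p x)
        = ∫ x in E, ∑ b, F b x * fderiv ℝ v x (Pi.single b 1) :=
          integral_congr_ae (ae_of_all _ fun x => hpt x)
      _ = ∫ x, ∑ b, F b x * fderiv ℝ v x (Pi.single b 1) := by
          apply setIntegral_eq_integral_of_forall_compl_eq_zero
          intro x hx
          have hz : fderiv ℝ v x = 0 := hDv0 x fun h => hx (hvE h)
          simp [hz]
      _ = ∑ b, ∫ x, F b x * fderiv ℝ v x (Pi.single b 1) :=
          integral_finset_sum _ fun b _ => (hkey b).1
  rw [hset, abs_mul, show |(1/2 : ℝ)| = 1/2 by norm_num]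
  calc (1/2 : ℝ) * |∑ b, ∫ x, F b x * fderiv ℝ v x (Pi.single b 1)|
      ≤ (1/2 : ℝ) * ∑ b, |∫ x, F b x * fderiv ℝ v x (Pi.single b 1)| :=
        mul_le_mul_of_nonneg_left (Finset.abs_sum_le_sum_abs _ _) (by norm_num)
    _ ≤ (1/2 : ℝ) * ∑ _b : Fin d, (volume K).toReal * (L' * ⨆ x ∈ E, |v x|) :=
        mul_le_mul_of_nonneg_left (Finset.sum_le_sum fun b _ => (hkey b).2) (by norm_num)
    _ = (1/2 : ℝ) * d * ((volume K).toReal * L') * ⨆ x ∈ E, |v x| := by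
        simp [Finset.sum_const, Finset.card_univ, nsmul_eq_mul]; ring
end

section
/- Let E be a topological space equipped with its Borel σ-algebra, and let μ be a σ-finite Borel measure on E such that μ(U) > 0 for every nonempty open set U ⊆ E. Let κ be a sub-Markov kernel from E to E (i.e., κ(x,·) is a Borel measure with κ(x,E) ≤ 1 for each x, measurably in x) satisfying: (i) symmetry with respect to μ: for all bounded nonnegative Borel functions f, g on E, ∫_E f(x) (∫_E g(y) κ(x,dy)) μ(dx) = ∫_E (∫_E f(y) κ(x,dy)) g(x) μ(dx); and (ii) strong Feller property: for every bounded Borel function f on E, the map x ↦ ∫_E f(y) κ(x,dy) is continuous on E. Then κ(x,·) is absolutely continuous with respect to μ for every x ∈ E; that is, for every Borel set N ⊆ E with μ(N) = 0 one has κ(x,N) = 0 for every x ∈ E. -/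
/-!
Test the symmetry against `f = 𝟙_N` and `g = 1`: the integral `∫ κ(x, N) μ(dx)` equals
`∫_N κ(x, E) μ(dx)`, which vanishes when `μ N = 0`, so `κ(·, N) = 0` holds `μ`-a.e.
The strong Feller property makes `x ↦ κ(x, N)` continuous, and a continuous function that
vanishes a.e. for a measure charging every nonempty open set vanishes everywhere.
-/

open MeasureTheory
open scoped ENNReal NNReal

section

variable {E : Type*} [MeasurableSpace E] {μ : Measure E} {κ : E → Measure E} {N : Set E}

lemma ae_kernel_apply_eq_zero_of_symm
    (hsymm : ∀ f g : E → ℝ≥0∞, Measurable f → Measurable g →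
      (∃ C : ℝ≥0, ∀ x, f x ≤ C) → (∃ C : ℝ≥0, ∀ x, g x ≤ C) →
      ∫⁻ x, f x * ∫⁻ y, g y ∂(κ x) ∂μ = ∫⁻ x, (∫⁻ y, f y ∂(κ x)) * g x ∂μ)
    (hκN : Measurable fun x => κ x N) (hN : MeasurableSet N) (hμN : μ N = 0) :
    ∀ᵐ x ∂μ, κ x N = 0 := by
  have hbound : ∃ C : ℝ≥0, ∀ x, N.indicator (1 : E → ℝ≥0∞) x ≤ C :=
    ⟨1, fun x => by by_cases hx : x ∈ N <;> simp [hx]⟩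
  have hsymmN := hsymm (N.indicator 1) 1 (measurable_one.indicator hN) measurable_one
    hbound ⟨1, fun _ => le_rfl⟩
  simp only [Pi.one_apply, mul_one, lintegral_indicator_one hN] at hsymmN
  have hindicator_null : N.indicator (1 : E → ℝ≥0∞) =ᵐ[μ] 0 :=
    (measure_eq_zero_iff_ae_notMem.mp hμN).mono fun x hx => Set.indicator_of_notMem hx 1
  change (fun x => κ x N) =ᵐ[μ] 0
  rw [← lintegral_eq_zero_iff hκN, ← hsymmN]
  exact lintegral_eq_zero_of_ae_eq_zero <|
    hindicator_null.mono fun x hx => by simp only [hx, Pi.zero_apply, zero_mul]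

lemma continuous_measureReal_of_strongFeller [TopologicalSpace E]
    (hfeller : ∀ f : E → ℝ, Measurable f → (∃ C : ℝ, ∀ x, |f x| ≤ C) →
      Continuous fun x => ∫ y, f y ∂(κ x))
    (hN : MeasurableSet N) :
    Continuous fun x => (κ x).real N := by
  have hbound : ∃ C : ℝ, ∀ x, |N.indicator (1 : E → ℝ) x| ≤ C :=
    ⟨1, fun x => by by_cases hx : x ∈ N <;> simp [hx]⟩
  simpa only [integral_indicator_one hN] using
    hfeller (N.indicator 1) (measurable_one.indicator hN) hbound

end

theorem stmt_4_general {E : Type*} [TopologicalSpace E] [MeasurableSpace E]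
    (μ : Measure E)
    (hμ_pos : ∀ U : Set E, IsOpen U → U.Nonempty → 0 < μ U)
    -- a sub-Markov kernel κ
    (κ : E → Measure E)
    (hκ_meas : ∀ s : Set E, MeasurableSet s → Measurable fun x => κ x s)
    (hκ_sub : ∀ x, κ x Set.univ ≤ 1)
    -- (i) symmetry with respect to μ
    (hsymm : ∀ f g : E → ℝ≥0∞, Measurable f → Measurable g →
      (∃ C : ℝ≥0, ∀ x, f x ≤ C) → (∃ C : ℝ≥0, ∀ x, g x ≤ C) →
      ∫⁻ x, f x * ∫⁻ y, g y ∂(κ x) ∂μ = ∫⁻ x, (∫⁻ y, f y ∂(κ x)) * g x ∂μ)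
    -- (ii) strong Feller property
    (hfeller : ∀ f : E → ℝ, Measurable f → (∃ C : ℝ, ∀ x, |f x| ≤ C) →
      Continuous fun x => ∫ y, f y ∂(κ x)) :
    ∀ N : Set E, MeasurableSet N → μ N = 0 → ∀ x : E, κ x N = 0 := by
  intro N hN hμN x
  have : μ.IsOpenPosMeasure := ⟨fun U hU hne => (hμ_pos U hU hne).ne'⟩
  have : IsFiniteMeasure (κ x) := ⟨(hκ_sub x).trans_lt ENNReal.one_lt_top⟩
  have hae : (fun y => (κ y).real N) =ᵐ[μ] 0 :=
    (ae_kernel_apply_eq_zero_of_symm hsymm (hκ_meas N hN) hN hμN).mono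
      fun y hy => by simp [measureReal_def, hy]
  have hreal : (κ x).real N = 0 := congrFun
    (((continuous_measureReal_of_strongFeller hfeller hN).ae_eq_iff_eq μ
      continuous_zero).mp hae) x
  rwa [measureReal_eq_zero_iff] at hreal

/-- **Absolute continuity of a symmetric strong Feller sub-Markov kernel
(Corollary 3.2):** if `κ` is a sub-Markov kernel, symmetric with respect to a
σ-finite measure `μ` charging every nonempty open set, and `κ` is strong
Feller, then `κ(x, ·) ≪ μ` for every `x`. -/
theorem stmt_4 {E : Type*} [TopologicalSpace E] [MeasurableSpace E] [BorelSpace E]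
    (μ : Measure E) [SigmaFinite μ]
    (hμ_pos : ∀ U : Set E, IsOpen U → U.Nonempty → 0 < μ U)
    -- a sub-Markov kernel κ
    (κ : E → Measure E)
    (hκ_meas : ∀ s : Set E, MeasurableSet s → Measurable fun x => κ x s)
    (hκ_sub : ∀ x, κ x Set.univ ≤ 1)
    -- (i) symmetry with respect to μ
    (hsymm : ∀ f g : E → ℝ≥0∞, Measurable f → Measurable g →
      (∃ C : ℝ≥0, ∀ x, f x ≤ C) → (∃ C : ℝ≥0, ∀ x, g x ≤ C) →
      ∫⁻ x, f x * ∫⁻ y, g y ∂(κ x) ∂μ = ∫⁻ x, (∫⁻ y, f y ∂(κ x)) * g x ∂μ)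
    -- (ii) strong Feller property
    (hfeller : ∀ f : E → ℝ, Measurable f → (∃ C : ℝ, ∀ x, |f x| ≤ C) →
      Continuous fun x => ∫ y, f y ∂(κ x)) :
    ∀ N : Set E, MeasurableSet N → μ N = 0 → ∀ x : E, κ x N = 0 :=
  stmt_4_general μ hμ_pos κ hκ_meas hκ_sub hsymm hfeller
end

section
/- Let d ≥ 3, let i, j, k ∈ {1,…,d} be distinct indices, let n ≥ 1 be an integer, and let ε > 0. Let A := {x ∈ ℝ^d : |x_l| ≤ 2n for all l ∈ {1,…,d}, ε ≤ |x_i − x_j| ≤ ε(1+ε), and |x_k − x_i| ≤ ε(1+ε)}. Then ∫_A |x_i − x_j|^{−2} dx ≤ 2^{2d−2} n^{d−2} ε, where the integral is with respect to Lebesgue measure on ℝ^d. -/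
/-!
The shear `y_j = x_j - x_i`, `y_k = x_k - x_i` (all other coordinates unchanged) preserves
Lebesgue measure, turns the integrand into `|y_j|⁻²`, and maps `A` into the box
`{ε ≤ |y_j| ≤ E} × [-E, E] × [-2n, 2n]^{d-2}` with `E = ε(1+ε)`. By Fubini the integral is at
most `2(ε⁻¹ - E⁻¹) · 2E · (4n)^{d-2}`, and `(ε⁻¹ - E⁻¹) E = ε`.
-/

open MeasureTheory ENNReal Set Matrix

theorem Matrix.transvection_mulVec {ι R : Type*} [Fintype ι] [DecidableEq ι] [CommRing R]
    (a b : ι) (c : R) (y : ι → R) :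
    transvection a b c *ᵥ y = Function.update y a (y a + c * y b) := by
  ext l
  by_cases h : l = a <;> simp [transvection, add_mulVec, single_mulVec, h]

theorem measurePreserving_ite_sub_eval {ι : Type*} [Fintype ι] [DecidableEq ι]
    {i j k : ι} (hij : i ≠ j) (hik : i ≠ k) (hjk : j ≠ k) :
    MeasurePreserving (fun (x : ι → ℝ) l => if l = j ∨ l = k then x l - x i else x l) := by
  convert (Real.volume_preserving_transvectionStruct ⟨j, i, hij.symm, -1⟩).comp
    (Real.volume_preserving_transvectionStruct ⟨k, i, hik.symm, -1⟩) using 1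
  ext x l
  simp only [Function.comp_apply, TransvectionStruct.toMatrix, toLin'_apply, transvection_mulVec,
    Function.update_apply]
  grind

theorem setLIntegral_univ_pi_comp_eval {ι : Type*} [Fintype ι] [DecidableEq ι]
    {α : ι → Type*} [∀ i, MeasurableSpace (α i)] (μ : (i : ι) → Measure (α i))
    [∀ i, SigmaFinite (μ i)] (S : (i : ι) → Set (α i)) (j : ι) {h : α j → ℝ≥0∞}
    (hh : Measurable h) :
    ∫⁻ y in univ.pi S, h (y j) ∂Measure.pi μ
      = (∏ l ∈ Finset.univ.erase j, μ l (S l)) * ∫⁻ t in S j, h t ∂μ j := by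
  rw [Measure.restrict_pi_pi, ← lintegral_map hh (measurable_pi_apply j), Measure.pi_map_eval,
    lintegral_smul_measure]
  simp

theorem setLIntegral_comp_eval_le_of_subset_preimage_pi {ι X : Type*} [Fintype ι] [DecidableEq ι]
    {α : ι → Type*} [∀ i, MeasurableSpace (α i)] {μ : (i : ι) → Measure (α i)}
    [∀ i, SigmaFinite (μ i)] [MeasurableSpace X] {ν : Measure X} {T : X → (i : ι) → α i}
    (hT : MeasurePreserving T ν (Measure.pi μ)) {S : (i : ι) → Set (α i)}
    (hS : ∀ i, MeasurableSet (S i)) {A : Set X} (hA : A ⊆ T ⁻¹' univ.pi S) (j : ι)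
    {h : α j → ℝ≥0∞} (hh : Measurable h) :
    ∫⁻ x in A, h (T x j) ∂ν ≤ (∏ l ∈ Finset.univ.erase j, μ l (S l)) * ∫⁻ t in S j, h t ∂μ j :=
  calc ∫⁻ x in A, h (T x j) ∂ν
      ≤ ∫⁻ x in T ⁻¹' univ.pi S, h (T x j) ∂ν := lintegral_mono_set hA
    _ = ∫⁻ y in univ.pi S, h (y j) ∂Measure.pi μ :=
        hT.setLIntegral_comp_preimage (.univ_pi hS) (hh.comp (measurable_pi_apply j))
    _ = _ := setLIntegral_univ_pi_comp_eval μ S j hh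

theorem prod_erase_volume_ite_Icc {ι : Type*} [Fintype ι] [DecidableEq ι] {j k : ι}
    (hjk : j ≠ k) (U : Set ℝ) (a b : ℝ) :
    ∏ l ∈ Finset.univ.erase j,
        volume (if l = j then U else if l = k then Icc (-a) a else Icc (-b) b)
      = ENNReal.ofReal (2 * a) * ENNReal.ofReal (2 * b) ^ (Fintype.card ι - 2) := by
  have hk : k ∈ Finset.univ.erase j := Finset.mem_erase.2 ⟨hjk.symm, Finset.mem_univ k⟩
  have hcard : ((Finset.univ.erase j).erase k).card = Fintype.card ι - 2 := by
    rw [Finset.card_erase_of_mem hk, Finset.card_erase_of_mem (Finset.mem_univ j),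
      Finset.card_univ]
    omega
  rw [← Finset.mul_prod_erase _ _ hk, ← hcard, ← Finset.prod_const]
  congr 1
  · simp [hjk.symm, Real.volume_Icc, two_mul]
  · refine Finset.prod_congr rfl fun l hl => ?_
    obtain ⟨hlk, hlj⟩ := Finset.mem_erase.1 hl
    rw [if_neg (Finset.ne_of_mem_erase hlj), if_neg hlk, Real.volume_Icc]
    ring_nf

theorem setLIntegral_Icc_zpow_neg_two {a b : ℝ} (hab : a ≤ b) (h0 : (0 : ℝ) ∉ Icc a b) :
    ∫⁻ t in Icc a b, ENNReal.ofReal (t ^ (-2 : ℤ)) = ENNReal.ofReal (a⁻¹ - b⁻¹) := by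
  have h0' : (0 : ℝ) ∉ uIcc a b := by rwa [uIcc_of_le hab]
  have hint : IntegrableOn (fun t : ℝ => t ^ (-2 : ℤ)) (Icc a b) :=
    (continuousOn_zpow₀ _ |>.mono fun t ht h => h0 (h ▸ ht)).integrableOn_compact isCompact_Icc
  rw [← ofReal_integral_eq_lintegral_ofReal hint (.of_forall fun t => by positivity),
    integral_Icc_eq_integral_Ioc, ← intervalIntegral.integral_of_le hab,
    integral_zpow (.inr ⟨by norm_num, h0'⟩)]
  norm_num
  ring_nf

theorem setLIntegral_abs_mem_Icc_zpow_neg_two_le {a b : ℝ} (ha : 0 < a) (hab : a ≤ b) :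
    ∫⁻ t in {t : ℝ | |t| ∈ Icc a b}, ENNReal.ofReal (t ^ (-2 : ℤ))
      ≤ ENNReal.ofReal (2 * (a⁻¹ - b⁻¹)) := by
  have hsplit : {t : ℝ | |t| ∈ Icc a b} = Icc (-b) (-a) ∪ Icc a b := by
    ext t
    simp only [mem_ofPred_eq, mem_union, mem_Icc]
    rcases abs_cases t with ⟨ht, -⟩ | ⟨ht, -⟩ <;> rw [ht] <;> grind
  have hinv : b⁻¹ ≤ a⁻¹ := inv_anti₀ ha hab
  calc ∫⁻ t in {t : ℝ | |t| ∈ Icc a b}, ENNReal.ofReal (t ^ (-2 : ℤ))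
      ≤ ENNReal.ofReal ((-b)⁻¹ - (-a)⁻¹) + ENNReal.ofReal (a⁻¹ - b⁻¹) := by
        rw [hsplit, ← setLIntegral_Icc_zpow_neg_two (by linarith) (fun h => by linarith [h.2]),
          ← setLIntegral_Icc_zpow_neg_two hab (fun h => by linarith [h.1])]
        exact lintegral_union_le _ _ _
    _ = ENNReal.ofReal (2 * (a⁻¹ - b⁻¹)) := by
        rw [inv_neg, inv_neg, neg_sub_neg, ← ENNReal.ofReal_add (by linarith) (by linarith)]
        ring_nf

theorem stmt_6_general {d : ℕ} (hd : 3 ≤ d)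
    (i j k : Fin d) (hij : i ≠ j) (hik : i ≠ k) (hjk : j ≠ k)
    (n : ℕ) (ε : ℝ) (hε : 0 < ε) :
    ∫⁻ x in {x : Fin d → ℝ | (∀ l, |x l| ≤ 2 * n) ∧
        ε ≤ |x i - x j| ∧ |x i - x j| ≤ ε * (1 + ε) ∧ |x k - x i| ≤ ε * (1 + ε)},
        ENNReal.ofReal (|x i - x j| ^ (-2 : ℤ))
      ≤ ENNReal.ofReal ((2 : ℝ) ^ (2 * d - 2) * (n : ℝ) ^ (d - 2) * ε) := by
  set E := ε * (1 + ε) with hE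
  set T : (Fin d → ℝ) → Fin d → ℝ := fun x l => if l = j ∨ l = k then x l - x i else x l
  set S : Fin d → Set ℝ := fun l =>
    if l = j then {t | |t| ∈ Icc ε E} else if l = k then Icc (-E) E else Icc (-(2 * n)) (2 * n)
  have hS (l : Fin d) : MeasurableSet (S l) := by
    simp only [S]
    split_ifs
    exacts [measurableSet_Icc.preimage continuous_abs.measurable, measurableSet_Icc,
      measurableSet_Icc]
  have hA : {x : Fin d → ℝ | (∀ l, |x l| ≤ 2 * n) ∧ ε ≤ |x i - x j| ∧ |x i - x j| ≤ E ∧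
      |x k - x i| ≤ E} ⊆ T ⁻¹' univ.pi S := by
    rintro x ⟨hbox, hlow, hup, hk⟩ l -
    rw [abs_sub_comm] at hlow hup
    rcases eq_or_ne l j with rfl | hlj
    · simpa [S, T] using ⟨hlow, hup⟩
    rcases eq_or_ne l k with rfl | hlk
    · simpa [S, T, hlj] using abs_le.1 hk
    · simpa [S, T, hlj, hlk] using abs_le.1 (hbox l)
  have hf (x : Fin d → ℝ) : |x i - x j| ^ (-2 : ℤ) = T x j ^ (-2 : ℤ) := by
    simp only [T, true_or, if_true]
    rw [abs_sub_comm, Even.zpow_abs (by decide)]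
  have hεE : ε ≤ E := by nlinarith
  have hSj : S j = {t | |t| ∈ Icc ε E} := if_pos rfl
  simp_rw [hf]
  calc _ ≤ (∏ l ∈ Finset.univ.erase j, volume (S l)) *
          ∫⁻ t in S j, ENNReal.ofReal (t ^ (-2 : ℤ)) :=
        setLIntegral_comp_eval_le_of_subset_preimage_pi
          (measurePreserving_ite_sub_eval hij hik hjk) hS hA j
          (measurable_id.pow_const _).ennreal_ofReal
    _ ≤ ENNReal.ofReal (2 * E) * ENNReal.ofReal (2 * (2 * n)) ^ (d - 2) *
          ENNReal.ofReal (2 * (ε⁻¹ - E⁻¹)) := by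
        rw [prod_erase_volume_ite_Icc hjk, Fintype.card_fin, hSj]
        gcongr
        exact setLIntegral_abs_mem_Icc_zpow_neg_two_le hε hεE
    _ = ENNReal.ofReal ((2 : ℝ) ^ (2 * d - 2) * (n : ℝ) ^ (d - 2) * ε) := by
        rw [← ofReal_pow (by positivity), ← ofReal_mul (by positivity),
          ← ofReal_mul (by positivity)]
        congr 1
        obtain ⟨m, rfl⟩ : ∃ m, d = m + 2 := ⟨d - 2, by omega⟩
        rw [show 2 * (m + 2) - 2 = 2 * (m + 1) by omega, Nat.add_sub_cancel, pow_mul, hE]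
        field_simp
        ring

/-- **Integral estimate from the proof of Lemma 4.3:** for distinct indices
`i, j, k`, `n ≥ 1` and `ε > 0`,
`∫_A |x_i − x_j|⁻² dx ≤ 2^{2d−2} n^{d−2} ε`, where
`A = {|x_l| ≤ 2n ∀l} ∩ {ε ≤ |x_i − x_j| ≤ ε(1+ε)} ∩ {|x_k − x_i| ≤ ε(1+ε)}`. -/
theorem stmt_6 {d : ℕ} (hd : 3 ≤ d)
    (i j k : Fin d) (hij : i ≠ j) (hik : i ≠ k) (hjk : j ≠ k)
    (n : ℕ) (hn : 1 ≤ n) (ε : ℝ) (hε : 0 < ε) :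
    ∫⁻ x in {x : Fin d → ℝ | (∀ l, |x l| ≤ 2 * n) ∧
        ε ≤ |x i - x j| ∧ |x i - x j| ≤ ε * (1 + ε) ∧ |x k - x i| ≤ ε * (1 + ε)},
        ENNReal.ofReal (|x i - x j| ^ (-2 : ℤ))
      ≤ ENNReal.ofReal ((2 : ℝ) ^ (2 * d - 2) * (n : ℝ) ^ (d - 2) * ε) :=
  stmt_6_general hd i j k hij hik hjk n ε hε
end

section
/- Let d ≥ 2, let Δ := {x ∈ (0,1)^d : x_1 + … + x_d = 1} be the open unit simplex, and let ς denote the (d−1)-dimensional Hausdorff measure on ℝ^d restricted to Δ. For each permutation τ of {1,…,d} let Δ_τ := {x ∈ Δ : x_{τ(1)} > … > x_{τ(d)}}. Let c : Δ → 𝕊^d (symmetric d×d real matrices) and p : Δ → [0,∞) be Borel measurable with c_{ii}(x) ≥ 0 for all i and x. Assume that for every permutation τ, ∫_{Δ_τ} c_{τ(d)τ(d)}(x) · x_{τ(d)}^{−2} · p(x) dς(x) < ∞. For x ∈ Δ whose minimal coordinate is attained at a unique index, let i(x) denote that index. Then lim_{n→∞} n² ∫_{{x ∈ Δ : 1/n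 < min_l x_l < 2/n, the minimum is attained at a unique index}} c_{i(x)i(x)}(x) p(x) dς(x) = 0. -/
open MeasureTheory Filter
open scoped ENNReal

/-- The open unit simplex `Δ = {x ∈ (0,1)^d : Σ x_i = 1}`. -/
def simplex (d : ℕ) : Set (Fin d → ℝ) :=
  {x | (∀ l, x l ∈ Set.Ioo (0 : ℝ) 1) ∧ ∑ l, x l = 1}

/-- The ordered cell `Δ_τ = {x ∈ Δ : x_{τ(1)} > ⋯ > x_{τ(d)}}`. -/
def simplexCell {d : ℕ} (τ : Equiv.Perm (Fin d)) : Set (Fin d → ℝ) :=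
  {x ∈ simplex d | StrictAnti fun k => x (τ k)}

open Set

/-! On the part of the simplex where the minimal coordinate `x_l` is unique and lies in
`(1/n, 2/n)` we have `n² ≤ 4 x_l⁻²`, so the `n`-th term is at most
`4 ∫_{i(x) = l, x_l < 2/n} c_ll x_l⁻² p dς`. Points with two equal coordinates lie in
`(d-2)`-dimensional affine subspaces and are `ς`-null; off them `{i(x) = l}` is covered by the
cells `Δ_τ` with `τ(d) = l`, so `c_ll x_l⁻² p` is `ς`-integrable on `{i(x) = l}` by the
hypothesis, and the integrals over the shrinking sets `{x_l < 2/n}` tend to zero by dominated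
convergence. -/

/-- The set `{x ∈ Δ : i(x) = l}`. -/
def simplexUniqueArgmin {d : ℕ} (l : Fin d) : Set (Fin d → ℝ) :=
  {x ∈ simplex d | ∀ m, m ≠ l → x l < x m}

lemma measurableSet_simplex (d : ℕ) : MeasurableSet (simplex d) := by
  simp only [simplex, Set.mem_Ioo]
  measurability

lemma measurableSet_simplexUniqueArgmin {d : ℕ} (l : Fin d) :
    MeasurableSet (simplexUniqueArgmin l) := by
  simp only [simplexUniqueArgmin, simplex, Set.mem_Ioo]
  measurability

lemma exists_perm_strictAnti {α : Type*} [LinearOrder α] {d : ℕ} {x : Fin d → α}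
    (hx : Function.Injective x) : ∃ τ : Equiv.Perm (Fin d), StrictAnti fun k => x (τ k) :=
  ⟨Tuple.sort (OrderDual.toDual ∘ x), Antitone.strictAnti_of_injective
    (monotone_toDual_comp_iff.1 (Tuple.monotone_sort _)) (hx.comp (Equiv.injective _))⟩

lemma hausdorffMeasure_eq_zero_of_sub_mem {E : Type*} [NormedAddCommGroup E]
    [NormedSpace ℝ E] [FiniteDimensional ℝ E] [MeasurableSpace E] [BorelSpace E]
    (K : Submodule ℝ E) {s : Set E} (hs : ∀ x ∈ s, ∀ y ∈ s, x - y ∈ K) {r : ℝ}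
    (hr : Module.finrank ℝ K < r) : μH[r] s = 0 := by
  obtain rfl | ⟨y, hy⟩ := s.eq_empty_or_nonempty
  · exact measure_empty
  have hsub : s ⊆ (fun v : K => y + v) '' univ := fun x hx =>
    ⟨⟨x - y, hs x hx y hy⟩, mem_univ _, add_sub_cancel y x⟩
  refine measure_mono_null hsub ?_
  have hiso : Isometry fun v : K => y + v :=
    (IsometryEquiv.addLeft y).isometry.comp isometry_subtype_coe
  rw [hiso.hausdorffMeasure_image
    (.inl ((Nat.cast_nonneg _).trans hr.le)), Real.hausdorffMeasure_of_finrank_lt hr,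
    Measure.coe_zero, Pi.zero_apply]

/-- The tie set lies in a translate of a subspace of codimension two. -/
lemma hausdorffMeasure_tie_eq_zero {d : ℕ} {i j : Fin d} (hij : i ≠ j) :
    μH[(d : ℝ) - 1] {x : Fin d → ℝ | x i = x j ∧ ∑ l, x l = 1} = 0 := by
  set S : (Fin d → ℝ) →ₗ[ℝ] ℝ := ∑ l, LinearMap.proj (R := ℝ) (φ := fun _ => ℝ) l
  set K := LinearMap.ker (LinearMap.proj (R := ℝ) (φ := fun _ : Fin d => ℝ) i -
    LinearMap.proj j) ⊓ LinearMap.ker S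
  have hKS : K < LinearMap.ker S := by
    refine SetLike.lt_iff_le_and_exists.2 ⟨inf_le_right, Pi.single i 1 - Pi.single j 1, ?_, ?_⟩
    · simp [S]
    · simp [K, S, hij, hij.symm]
  have hS : LinearMap.ker S ≠ ⊤ := by
    intro h
    have : Pi.single i (1 : ℝ) ∈ LinearMap.ker S := h ▸ Submodule.mem_top
    simp [S] at this
  have hK : Module.finrank ℝ K + 1 < d := by
    have := Submodule.finrank_lt hS
    rw [Module.finrank_fin_fun] at this
    have := Submodule.finrank_lt_finrank_of_lt hKS
    omega
  refine hausdorffMeasure_eq_zero_of_sub_mem K (fun x hx y hy => ?_) ?_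
  · simp [K, S, Finset.sum_sub_distrib, hx.1, hy.1, hx.2, hy.2]
  · rw [lt_sub_iff_add_lt]
    exact_mod_cast hK

lemma ae_injective_simplex (d : ℕ) :
    ∀ᵐ x ∂(μH[(d : ℝ) - 1]).restrict (simplex d), Function.Injective x := by
  have hpair : ∀ i j : Fin d,
      ∀ᵐ x ∂(μH[(d : ℝ) - 1]).restrict (simplex d), i ≠ j → x i ≠ x j := by
    intro i j
    rcases eq_or_ne i j with rfl | hij
    · exact ae_of_all _ fun _ h => absurd rfl h
    rw [ae_restrict_iff' (measurableSet_simplex d)]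
    filter_upwards [measure_eq_zero_iff_ae_notMem.1 (hausdorffMeasure_tie_eq_zero hij)]
      with x hx hxs _ hxij using hx ⟨hxij, hxs.2⟩
  filter_upwards [ae_all_iff.2 fun i => ae_all_iff.2 (hpair i)] with x hx i j hxij
  by_contra hij
  exact hx i j hij hxij

lemma setLIntegral_simplexUniqueArgmin_lt_top {d : ℕ} {μ : Measure (Fin d → ℝ)}
    (hμ : ∀ᵐ x ∂μ, Function.Injective x) {k : Fin d} (hk : IsTop k)
    (g : Fin d → (Fin d → ℝ) → ℝ≥0∞)
    (hg : ∀ τ : Equiv.Perm (Fin d), ∫⁻ x in simplexCell τ, g (τ k) x ∂μ < ⊤) (l : Fin d) :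
    ∫⁻ x in simplexUniqueArgmin l, g l x ∂μ < ⊤ := by
  have hcover : simplexUniqueArgmin l ≤ᵐ[μ]
      ⋃ τ : {τ : Equiv.Perm (Fin d) // τ k = l}, simplexCell τ.1 := by
    filter_upwards [hμ] with x hx hxl
    obtain ⟨τ, hτ⟩ := exists_perm_strictAnti hx
    have hτk : τ k = l := by
      by_contra hne
      have hmin : x (τ k) ≤ x (τ (τ.symm l)) := hτ.antitone (hk _)
      rw [Equiv.apply_symm_apply] at hmin
      exact (hxl.2 _ hne).not_ge hmin
    exact mem_iUnion.2 ⟨⟨τ, hτk⟩, hxl.1, hτ⟩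
  calc ∫⁻ x in simplexUniqueArgmin l, g l x ∂μ
      ≤ ∫⁻ x in ⋃ τ : {τ : Equiv.Perm (Fin d) // τ k = l}, simplexCell τ.1, g l x ∂μ :=
        lintegral_mono_set' hcover
    _ ≤ ∑' τ : {τ : Equiv.Perm (Fin d) // τ k = l}, ∫⁻ x in simplexCell τ.1, g l x ∂μ :=
        lintegral_iUnion_le _ _
    _ = ∑ τ : {τ : Equiv.Perm (Fin d) // τ k = l}, ∫⁻ x in simplexCell τ.1, g (τ.1 k) x ∂μ := by
        rw [tsum_fintype]
        refine Finset.sum_congr rfl fun τ _ => ?_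
        rw [τ.2]
    _ < ⊤ := ENNReal.sum_lt_top.2 fun τ _ => hg τ

lemma tendsto_setLIntegral_inter_lt {α : Type*} [MeasurableSpace α] {μ : Measure α}
    {s : Set α} {f : α → ℝ} {g : α → ℝ≥0∞} {ε : ℕ → ℝ} (hs : MeasurableSet s)
    (hf : Measurable f) (hg : Measurable g) (hfs : ∀ x ∈ s, 0 < f x)
    (hgs : ∫⁻ x in s, g x ∂μ ≠ ∞) (hε : Tendsto ε atTop (nhds 0)) :
    Tendsto (fun n => ∫⁻ x in s ∩ {x | f x < ε n}, g x ∂μ) atTop (nhds 0) := by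
  have hmeas : ∀ n, MeasurableSet (s ∩ {x | f x < ε n}) :=
    fun n => hs.inter (measurableSet_lt hf measurable_const)
  have hout : ∀ x, ∀ᶠ n in atTop, x ∉ s ∩ {x | f x < ε n} := by
    intro x
    by_cases hx : x ∈ s
    · filter_upwards [hε.eventually (gt_mem_nhds (hfs x hx))] with n hn hxn
      exact hxn.2.not_gt hn
    · exact .of_forall fun n hxn => hx hxn.1
  simp_rw [← lintegral_indicator (hmeas _)]
  simpa using tendsto_lintegral_of_dominated_convergence (f := fun _ => 0) (s.indicator g)
    (fun n => hg.indicator (hmeas n))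
    (fun n => .of_forall (indicator_le_indicator_of_subset inter_subset_left fun _ => zero_le))
    (by rwa [lintegral_indicator hs])
    (.of_forall fun x => tendsto_const_nhds.congr'
      ((hout x).mono fun n hn => (indicator_of_notMem hn g).symm))

lemma natCast_sq_mul_ofReal_le {n : ℕ} {y a b : ℝ} (hy : 0 < y) (hyn : y < 2 / n) :
    (n : ℝ≥0∞) ^ 2 * ENNReal.ofReal (a * b) ≤ 4 * ENNReal.ofReal (a * y ^ (-2 : ℤ) * b) := by
  rcases n.eq_zero_or_pos with rfl | hn
  · simp
  have hny : (n : ℝ) * y < 2 := by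
    rw [lt_div_iff₀ (by exact_mod_cast hn)] at hyn
    linarith
  have hsq : (n : ℝ) ^ 2 ≤ 4 * y ^ (-2 : ℤ) := by
    rw [zpow_neg, zpow_ofNat, ← div_eq_mul_inv, le_div_iff₀ (by positivity), ← mul_pow]
    nlinarith [mul_pos (Nat.cast_pos.2 hn : (0 : ℝ) < n) hy]
  calc (n : ℝ≥0∞) ^ 2 * ENNReal.ofReal (a * b)
      = ENNReal.ofReal ((n : ℝ) ^ 2) * ENNReal.ofReal (a * b) := by
        rw [ENNReal.ofReal_pow (Nat.cast_nonneg n), ENNReal.ofReal_natCast]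
    _ ≤ ENNReal.ofReal (4 * y ^ (-2 : ℤ)) * ENNReal.ofReal (a * b) := by gcongr
    _ = 4 * ENNReal.ofReal (a * y ^ (-2 : ℤ) * b) := by
        rw [← ENNReal.ofReal_mul (by positivity), ← ENNReal.ofReal_ofNat 4,
          ← ENNReal.ofReal_mul (by norm_num)]
        ring_nf

lemma natCast_sq_mul_setLIntegral_le {d : ℕ} {μ : Measure (Fin d → ℝ)} {a b : (Fin d → ℝ) → ℝ}
    (ha : Measurable a) (hb : Measurable b) {n : ℕ} {l : Fin d} {s : Set (Fin d → ℝ)}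
    (hs : s ⊆ simplexUniqueArgmin l ∩ {x | x l < 2 / n}) :
    (n : ℝ≥0∞) ^ 2 * ∫⁻ x in s, ENNReal.ofReal (a x * b x) ∂μ ≤
      4 * ∫⁻ x in simplexUniqueArgmin l ∩ {x | x l < 2 / n},
        ENNReal.ofReal (a x * x l ^ (-2 : ℤ) * b x) ∂μ :=
  calc (n : ℝ≥0∞) ^ 2 * ∫⁻ x in s, ENNReal.ofReal (a x * b x) ∂μ
      = ∫⁻ x in s, (n : ℝ≥0∞) ^ 2 * ENNReal.ofReal (a x * b x) ∂μ :=
        (lintegral_const_mul' _ _ (by simp)).symm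
    _ ≤ ∫⁻ x in s, 4 * ENNReal.ofReal (a x * x l ^ (-2 : ℤ) * b x) ∂μ :=
        setLIntegral_mono (by fun_prop) fun x hx =>
          natCast_sq_mul_ofReal_le ((hs hx).1.1.1 l).1 (hs hx).2
    _ ≤ ∫⁻ x in simplexUniqueArgmin l ∩ {x | x l < 2 / n},
          4 * ENNReal.ofReal (a x * x l ^ (-2 : ℤ) * b x) ∂μ :=
        lintegral_mono_set hs
    _ = 4 * ∫⁻ x in simplexUniqueArgmin l ∩ {x | x l < 2 / n},
          ENNReal.ofReal (a x * x l ^ (-2 : ℤ) * b x) ∂μ :=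
        lintegral_const_mul' _ _ (by simp)

/-- **Core estimate in the proof of Proposition 6.1:** under the integrability
condition (6.1) on `(c, p)` with respect to the `(d−1)`-dimensional Hausdorff
measure `ς` on the simplex, `n² ∫_{{1/n < min_l x_l < 2/n, unique min}}
c_{i(x)i(x)} p dς → 0`.  The region of a unique minimum at index `l` is
`{x : x_l < x_m ∀ m ≠ l}`, and the integral over the unique-minimum region is
written as the sum over `l` of the integrals over these disjoint pieces. -/
theorem stmt_12 {d : ℕ} (hd : 2 ≤ d)
    (c : (Fin d → ℝ) → Matrix (Fin d) (Fin d) ℝ) (p : (Fin d → ℝ) → ℝ)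
    (hc_meas : ∀ i j, Measurable fun x => c x i j)
    (hp_meas : Measurable p)
    (hint : ∀ τ : Equiv.Perm (Fin d),
      ∫⁻ x in simplexCell τ,
          ENNReal.ofReal
            (c x (τ ⟨d - 1, by omega⟩) (τ ⟨d - 1, by omega⟩) *
              (x (τ ⟨d - 1, by omega⟩)) ^ (-2 : ℤ) * p x)
          ∂((μH[(d : ℝ) - 1]).restrict (simplex d)) < ⊤) :
    Tendsto (fun n : ℕ => (n : ℝ≥0∞) ^ 2 *
        ∑ l : Fin d,
          ∫⁻ x in {x ∈ simplex d |
              (∀ m, m ≠ l → x l < x m) ∧ 1 / (n : ℝ) < x l ∧ x l < 2 / (n : ℝ)},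
            ENNReal.ofReal (c x l l * p x)
            ∂((μH[(d : ℝ) - 1]).restrict (simplex d)))
      atTop (nhds 0) := by
  set ν := (μH[(d : ℝ) - 1]).restrict (simplex d)
  set g : Fin d → (Fin d → ℝ) → ℝ≥0∞ :=
    fun l x => ENNReal.ofReal (c x l l * x l ^ (-2 : ℤ) * p x)
  have hk : IsTop (⟨d - 1, by omega⟩ : Fin d) :=
    fun j => Fin.le_def.2 (Nat.le_sub_one_of_lt j.isLt)
  have hlim : ∀ l, Tendsto (fun n : ℕ =>
      4 * ∫⁻ x in simplexUniqueArgmin l ∩ {x | x l < 2 / n}, g l x ∂ν) atTop (nhds 0) := by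
    intro l
    have hfin := setLIntegral_simplexUniqueArgmin_lt_top (ae_injective_simplex d) hk g hint l
    simpa using ENNReal.Tendsto.const_mul (a := 4)
      (tendsto_setLIntegral_inter_lt (measurableSet_simplexUniqueArgmin l)
        (measurable_pi_apply l) (by fun_prop) (fun x hx => (hx.1.1 l).1) hfin.ne
        (tendsto_const_div_atTop_nhds_zero_nat 2)) (.inr ENNReal.ofNat_ne_top)
  refine tendsto_of_tendsto_of_tendsto_of_le_of_le tendsto_const_nhds
    (by simpa using tendsto_finsetSum Finset.univ fun l _ => hlim l) (fun _ => zero_le)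
    fun n => ?_
  rw [Finset.mul_sum]
  exact Finset.sum_le_sum fun l _ => natCast_sq_mul_setLIntegral_le (hc_meas l l) hp_meas
    fun x hx => ⟨⟨hx.1, hx.2.1⟩, hx.2.2.2⟩
end

section
/- Let d ≥ 2, β ≥ 0, σ² > 0, and γ, g ∈ ℝ^d. For a permutation τ of {1,…,d} define p_τ : (0,∞)^d → (0,∞) by p_τ(x) := ‖x‖_{2β}^{2(1+(d−1)β) − d} · Π_{k=1}^d x_{τ(k)}^{ 2(γ_{τ(k)} + g_k)/σ² + 2β − 1 }, where ‖x‖_r := (Σ_{i=1}^d x_i^r)^{1/r} for r ≠ 0 and ‖x‖_0 := 1. If x ∈ (0,∞)^d and τ, τ' are two permutations such that both x_{τ(1)} ≥ x_{τ(2)} ≥ … ≥ x_{τ(d)} and x_{τ'(1)} ≥ x_{τ'(2)} ≥ … ≥ x_{τ'(d)}, then p_τ(x) = p_τ'(x). -/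
/-- The `r`-"norm" `‖x‖_r = (Σ_i x_i^r)^{1/r}` for `r ≠ 0`, with the
convention `‖x‖_0 = 1`. -/
noncomputable def pnorm {d : ℕ} (r : ℝ) (x : Fin d → ℝ) : ℝ :=
  if r = 0 then 1 else (∑ i, x i ^ r) ^ (1 / r)

/-! The part `γ_{τ(k)}` of the exponent travels with the coordinate `x_{τ(k)}`, so its
contribution `Π_i x_i^{2γ_i/σ²}` does not depend on `τ`; what remains depends on `τ`
only through the ordered tuple `x ∘ τ`, which is the same for all permutations that sort
`x` decreasingly. -/

theorem Real.prod_perm_rpow_add {ι : Type*} [Fintype ι] {x : ι → ℝ} (hx : ∀ i, 0 < x i)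
    (σ : Equiv.Perm ι) (a b : ι → ℝ) :
    ∏ k, x (σ k) ^ (a (σ k) + b k) = (∏ i, x i ^ a i) * ∏ k, x (σ k) ^ b k := by
  rw [← Equiv.prod_comp σ (fun i => x i ^ a i), ← Finset.prod_mul_distrib]
  exact Finset.prod_congr rfl fun k _ => Real.rpow_add (hx (σ k)) _ _

theorem stmt_15_general {d : ℕ} (β : ℝ)
    (σsq : ℝ) (γ g : Fin d → ℝ)
    (pτ : Equiv.Perm (Fin d) → (Fin d → ℝ) → ℝ)
    (hpτ : ∀ τ x, pτ τ x =
      pnorm (2 * β) x ^ (2 * (1 + ((d : ℝ) - 1) * β) - (d : ℝ)) *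
        ∏ k, x (τ k) ^ (2 * (γ (τ k) + g k) / σsq + 2 * β - 1))
    (x : Fin d → ℝ) (hx : ∀ i, 0 < x i)
    (τ τ' : Equiv.Perm (Fin d))
    (hτ : Antitone fun k => x (τ k)) (hτ' : Antitone fun k => x (τ' k)) :
    pτ τ x = pτ τ' x := by
  have sorted_eq : x ∘ τ = x ∘ τ' := Tuple.unique_antitone hτ hτ'
  have exponent_split : ∀ i k, 2 * (γ i + g k) / σsq + 2 * β - 1 =
      2 * γ i / σsq + (2 * g k / σsq + 2 * β - 1) := fun _ _ => by ring
  simp only [hpτ, exponent_split]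
  rw [Real.prod_perm_rpow_add hx τ (fun i => 2 * γ i / σsq),
    Real.prod_perm_rpow_add hx τ' (fun i => 2 * γ i / σsq)]
  simp only [← Function.comp_apply (f := x), sorted_eq]

/-- **Consistency of the piecewise density of the hybrid Atlas /
generalized volatility-stabilized model (Example 6.3, formula (6.4)):** the
functions `p_τ(x) = ‖x‖_{2β}^{2(1+(d−1)β)−d} Π_k x_{τ(k)}^{2(γ_{τ(k)}+g_k)/σ² + 2β − 1}`
agree at every point `x ∈ (0,∞)^d` that is weakly ordered by both `τ` and `τ'`. -/
theorem stmt_15 {d : ℕ} (hd : 2 ≤ d) (β : ℝ) (hβ : 0 ≤ β)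
    (σsq : ℝ) (hσ : 0 < σsq) (γ g : Fin d → ℝ)
    (pτ : Equiv.Perm (Fin d) → (Fin d → ℝ) → ℝ)
    (hpτ : ∀ τ x, pτ τ x =
      pnorm (2 * β) x ^ (2 * (1 + ((d : ℝ) - 1) * β) - (d : ℝ)) *
        ∏ k, x (τ k) ^ (2 * (γ (τ k) + g k) / σsq + 2 * β - 1))
    (x : Fin d → ℝ) (hx : ∀ i, 0 < x i)
    (τ τ' : Equiv.Perm (Fin d))
    (hτ : Antitone fun k => x (τ k)) (hτ' : Antitone fun k => x (τ' k)) :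
    pτ τ x = pτ τ' x :=
  stmt_15_general β σsq γ g pτ hpτ x hx τ τ' hτ hτ'
end
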